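/- arXiv:1305.6239 — 6 statements merged into one kernel-verified Lean document; each statement's English description precedes it below -/
import Mathlib

section
/- Let (M,ρ) be a metric space and let μ be a Borel probability measure on M whose support X_μ is compact and which satisfies the (a,b)-standard assumption for some a>0, b>0. Let X₁,…,Xₙ be i.i.d. random variables with law μ and let X̂ₙ = {X₁,…,Xₙ}. Then for every ε>0, ℙ( d_H(X_μ, X̂ₙ) > 2ε ) ≤ min( (2^b/(a ε^b))·exp(−n a ε^b), 1 ). -/
/-!
A maximal `ε`-separated subset `s` of the support is an `ε`-cover of it, and its points carry
disjoint balls of radius `ε / 2`, each of mass at least `min (a (ε/2)ᵇ) 1`; hence `s` has at most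
`2ᵇ / (a εᵇ)` points, unless `a (ε/2)ᵇ > 1`, in which case every ball of radius `ε` around a
point of `Xμ` has full mass. If every ball `B(y, ε)`, `y ∈ s`, contains a sample point, then
`d_H(Xμ, X̂ₙ) ≤ 2ε`. All `n` samples miss a fixed such ball with probability at most
`(1 - min (a εᵇ) 1)ⁿ ≤ exp (-n a εᵇ)`, and a union bound over `s` concludes.
-/

open MeasureTheory Metric
open scoped ENNReal NNReal

lemma Metric.packingNumber_le_of_forall_finset_card_le {X : Type*} [PseudoEMetricSpace X]
    {ε : ℝ≥0} {A : Set X} {N : ℕ}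
    (h : ∀ s : Finset X, ↑s ⊆ A → IsSeparated ε (s : Set X) → s.card ≤ N) :
    packingNumber ε A ≤ N := by
  refine iSup₂_le fun C hCA => iSup_le fun hC => ?_
  by_contra! hlt
  obtain ⟨t, htC, ht⟩ := Set.exists_subset_encard_eq (Order.add_one_le_of_lt hlt)
  have htfin : t.Finite := Set.finite_of_encard_eq_coe ht
  have hcard := h htfin.toFinset (by simpa using htC.trans hCA) (by simpa using hC.subset htC)
  rw [← Set.ncard_eq_toFinset_card t htfin] at hcard
  have : (t.ncard : ℕ∞) = N + 1 := by rw [htfin.cast_ncard_eq, ht]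
  norm_cast at this
  omega

lemma hausdorffDist_range_le_two_mul {M ι : Type*} [PseudoMetricSpace M] {X s : Set M}
    {ω : ι → M} {ε : ℝ} (hε : 0 ≤ ε) (hωX : Set.range ω ⊆ X)
    (hcover : ∀ x ∈ X, ∃ y ∈ s, dist x y ≤ ε) (hhit : ∀ y ∈ s, ∃ i, dist (ω i) y < ε) :
    hausdorffDist X (Set.range ω) ≤ 2 * ε := by
  refine hausdorffDist_le_of_mem_dist (by positivity) (fun x hx => ?_) ?_
  · obtain ⟨y, hys, hxy⟩ := hcover x hx
    obtain ⟨i, hi⟩ := hhit y hys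
    refine ⟨ω i, Set.mem_range_self i, ?_⟩
    linarith [dist_triangle_right x (ω i) y]
  · rintro _ ⟨i, rfl⟩
    exact ⟨ω i, hωX (Set.mem_range_self i), by simp [hε]⟩

lemma one_sub_min_one_pow_le_exp (t : ℝ) (n : ℕ) :
    (1 - min t 1) ^ n ≤ Real.exp (-(n * t)) := by
  rcases le_or_gt t 1 with ht1 | ht1
  · calc (1 - min t 1) ^ n = (1 - t) ^ n := by rw [min_eq_left ht1]
      _ ≤ Real.exp (-t) ^ n := by
        gcongr
        linarith [Real.add_one_le_exp (-t)]
      _ = Real.exp (-(n * t)) := by rw [← Real.exp_nat_mul]; ring_nf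
  · rcases n.eq_zero_or_pos with rfl | hn
    · simp
    · rw [min_eq_right ht1.le, sub_self, zero_pow hn.ne']
      positivity

lemma card_mul_one_sub_min_one_pow_le {k n : ℕ} {t β : ℝ} (ht : 0 < t) (hβ : 1 ≤ β)
    (hk : k * min (t / β) 1 ≤ 1) (hn : n ≠ 0) :
    k * (1 - min t 1) ^ n ≤ β / t * Real.exp (-(n * t)) := by
  rcases le_or_gt (t / β) 1 with htβ | htβ
  · have hkβ : (k : ℝ) ≤ β / t := by
      rw [min_eq_left htβ] at hk
      rw [le_div_iff₀ ht]
      calc (k : ℝ) * t = k * (t / β) * β := by field_simp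
        _ ≤ 1 * β := by gcongr
        _ = β := one_mul β
    exact mul_le_mul hkβ (one_sub_min_one_pow_le_exp t n)
      (pow_nonneg (sub_nonneg.2 (min_le_right _ _)) n) (by positivity)
  · have ht1 : 1 ≤ t := htβ.le.trans (div_le_self ht.le hβ)
    rw [min_eq_right ht1, sub_self, zero_pow hn, mul_zero]
    positivity

section Measure

variable {M : Type*} [PseudoMetricSpace M] [MeasurableSpace M]

lemma Metric.IsSeparated.card_mul_le_one [OpensMeasurableSpace M] {μ : Measure M}
    [IsProbabilityMeasure μ] {s : Finset M} {ε c : ℝ}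
    (hs : IsSeparated (ENNReal.ofReal ε) (s : Set M))
    (hlow : ∀ x ∈ s, ENNReal.ofReal c ≤ μ (ball x (ε / 2))) :
    (s.card : ℝ) * c ≤ 1 := by
  have hdisj : (s : Set M).PairwiseDisjoint (fun x => ball x (ε / 2)) := fun x hx y hy hxy =>
    ball_disjoint_ball <| by
      have hsep : ENNReal.ofReal ε < edist x y := hs hx hy hxy
      rw [edist_dist, ENNReal.ofReal_lt_ofReal_iff'] at hsep
      linarith [hsep.1]
  rw [← ENNReal.ofReal_le_one, ENNReal.ofReal_mul (by positivity), ENNReal.ofReal_natCast]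
  calc (s.card : ℝ≥0∞) * ENNReal.ofReal c = ∑ _x ∈ s, ENNReal.ofReal c := by simp
    _ ≤ ∑ x ∈ s, μ (ball x (ε / 2)) := Finset.sum_le_sum hlow
    _ = μ (⋃ x ∈ s, ball x (ε / 2)) :=
      (measure_biUnion_finset hdisj fun _ _ => measurableSet_ball).symm
    _ ≤ 1 := prob_le_one

lemma exists_finset_cover_card_mul_le_one [OpensMeasurableSpace M] {μ : Measure M}
    [IsProbabilityMeasure μ] {X : Set M} {ε c : ℝ} (hε : 0 ≤ ε) (hc : 0 < c)
    (hlow : ∀ x ∈ X, ENNReal.ofReal c ≤ μ (ball x (ε / 2))) :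
    ∃ s : Finset M, ↑s ⊆ X ∧ (∀ x ∈ X, ∃ y ∈ s, dist x y ≤ ε) ∧ (s.card : ℝ) * c ≤ 1 := by
  have hcard : ∀ s : Finset M, ↑s ⊆ X → IsSeparated (ENNReal.ofReal ε) (s : Set M) →
      (s.card : ℝ) * c ≤ 1 := fun s hsX hs =>
    hs.card_mul_le_one fun x hx => hlow x (hsX hx)
  have hpack : packingNumber ε.toNNReal X ≠ ⊤ := by
    refine ne_top_of_le_ne_top (ENat.natCast_ne_top ⌊1 / c⌋₊)
      (packingNumber_le_of_forall_finset_card_le fun s hsX hs => ?_)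
    exact Nat.le_floor ((le_div_iff₀ hc).2 (by simpa using hcard s hsX hs))
  have hfin : (maximalSeparatedSet ε.toNNReal X).Finite := by
    rw [← Set.encard_ne_top_iff, encard_maximalSeparatedSet hpack]
    exact hpack
  refine ⟨hfin.toFinset, by simpa using maximalSeparatedSet_subset, fun x hx => ?_,
    hcard _ (by simpa using maximalSeparatedSet_subset)
      (by rw [Set.Finite.coe_toFinset]; exact isSeparated_maximalSeparatedSet)⟩
  obtain ⟨y, hyS, hxy⟩ := isCover_maximalSeparatedSet hpack hx
  exact ⟨y, by simpa using hyS, (edist_le_ofReal hε).1 hxy⟩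

lemma pi_hausdorffDist_range_gt_le_sum {ι : Type*} [Fintype ι] {μ : Measure M} [SigmaFinite μ]
    {X : Set M} (hX : ∀ᵐ x ∂μ, x ∈ X) {s : Finset M} {ε : ℝ} (hε : 0 ≤ ε)
    (hcover : ∀ x ∈ X, ∃ y ∈ s, dist x y ≤ ε) :
    Measure.pi (fun _ : ι => μ) {ω | 2 * ε < hausdorffDist X (Set.range ω)}
      ≤ ∑ y ∈ s, μ (ball y ε)ᶜ ^ Fintype.card ι := by
  have hmiss : {ω : ι → M | 2 * ε < hausdorffDist X (Set.range ω)}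
      ≤ᵐ[Measure.pi fun _ => μ] ⋃ y ∈ s, Set.univ.pi fun _ => (ball y ε)ᶜ := by
    have hrange : ∀ᵐ ω ∂Measure.pi (fun _ : ι => μ), ∀ i, ω i ∈ X :=
      ae_all_iff.2 fun i => Measure.tendsto_eval_ae_ae.eventually hX
    filter_upwards [hrange] with ω hωX (hfar : 2 * ε < _)
    by_contra hnear
    change ω ∉ ⋃ y ∈ s, Set.univ.pi fun _ => (ball y ε)ᶜ at hnear
    simp only [Set.mem_iUnion, Set.mem_pi, Set.mem_univ, Set.mem_compl_iff, mem_ball,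
      forall_const, exists_prop, not_exists, not_and, not_forall, not_not] at hnear
    exact not_lt_of_ge
      (hausdorffDist_range_le_two_mul hε (Set.range_subset_iff.2 hωX) hcover hnear) hfar
  calc _ ≤ Measure.pi (fun _ : ι => μ) (⋃ y ∈ s, Set.univ.pi fun _ => (ball y ε)ᶜ) :=
        measure_mono_ae hmiss
    _ ≤ ∑ y ∈ s, Measure.pi (fun _ : ι => μ) (Set.univ.pi fun _ => (ball y ε)ᶜ) :=
        measure_biUnion_finset_le _ _
    _ = ∑ y ∈ s, μ (ball y ε)ᶜ ^ Fintype.card ι := by simp [Measure.pi_pi]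

end Measure

theorem stmt_0_general {M : Type*} [MetricSpace M] [MeasurableSpace M] [BorelSpace M]
    (μ : Measure M) [IsProbabilityMeasure μ]
    (Xμ : Set M) (hXclosed : IsClosed Xμ) (hXfull : μ Xμ = 1)
    (a b : ℝ) (ha : 0 < a) (hb : 0 < b)
    (hstd : ∀ x ∈ Xμ, ∀ r : ℝ, 0 < r →
      ENNReal.ofReal (min (a * r ^ b) 1) ≤ μ (ball x r))
    (n : ℕ) (ε : ℝ) (hε : 0 < ε) :
    (Measure.pi fun _ : Fin n => μ)
        {ω : Fin n → M | 2 * ε < hausdorffDist Xμ (Set.range ω)}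
      ≤ ENNReal.ofReal
          (min ((2 ^ b / (a * ε ^ b)) * Real.exp (-(n * a * ε ^ b))) 1) := by
  rcases Nat.eq_zero_or_pos n with rfl | hn
  -- with no sample, `hausdorffDist Xμ ∅ = 0` by convention
  · simp [Set.range_eq_empty, show ¬2 * ε < 0 by linarith]
  set t := a * ε ^ b
  have hhalf : a * (ε / 2) ^ b = t / 2 ^ b := by
    rw [Real.div_rpow hε.le zero_le_two, mul_div_assoc]
  obtain ⟨s, hsX, hcover, hcard⟩ := exists_finset_cover_card_mul_le_one (μ := μ) hε.le
    (c := min (a * (ε / 2) ^ b) 1) (by positivity) fun x hx => hstd x hx _ (by positivity)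
  have hX : ∀ᵐ x ∂μ, x ∈ Xμ :=
    (ae_mem_iff_measure_eq hXclosed.nullMeasurableSet).2 (by simp [hXfull])
  have hmiss : ∀ y ∈ s, μ (ball y ε)ᶜ ^ n ≤ ENNReal.ofReal ((1 - min t 1) ^ n) := by
    intro y hy
    rw [ENNReal.ofReal_pow (sub_nonneg.2 (min_le_right _ _)),
      prob_compl_eq_one_sub measurableSet_ball, ENNReal.ofReal_sub _ (by positivity),
      ENNReal.ofReal_one]
    gcongr
    exact hstd y (hsX hy) ε hε
  rw [ENNReal.ofReal_min, ENNReal.ofReal_one]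
  refine le_min ?_ prob_le_one
  calc _ ≤ ∑ y ∈ s, μ (ball y ε)ᶜ ^ n := by
        simpa using pi_hausdorffDist_range_gt_le_sum (ι := Fin n) hX hε.le hcover
    _ ≤ ∑ _y ∈ s, ENNReal.ofReal ((1 - min t 1) ^ n) := Finset.sum_le_sum hmiss
    _ = ENNReal.ofReal (s.card * (1 - min t 1) ^ n) := by
        rw [Finset.sum_const, nsmul_eq_mul, ENNReal.ofReal_mul (by positivity),
          ENNReal.ofReal_natCast]
    _ ≤ _ := by
      refine ENNReal.ofReal_le_ofReal ?_
      rw [mul_assoc (n : ℝ)]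
      exact card_mul_one_sub_min_one_pow_le (by positivity) (Real.one_le_rpow one_le_two hb.le)
        (hhalf ▸ hcard) hn.ne'

/-- If `μ` is a Borel probability measure on a metric space `M` whose
support `Xμ` (the smallest closed set of full measure) is compact and which satisfies the
`(a,b)`-standard assumption, and `X̂ₙ = {X₁,…,Xₙ}` with `X₁,…,Xₙ` i.i.d. of law `μ`
(modelled by the product measure `μ^⊗n` on `Fin n → M`), then for every `ε > 0`,
`ℙ(d_H(Xμ, X̂ₙ) > 2ε) ≤ min((2^b/(a εᵇ)) exp(-n a εᵇ), 1)`. -/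
theorem stmt_0 {M : Type*} [MetricSpace M] [MeasurableSpace M] [BorelSpace M]
    (μ : Measure M) [IsProbabilityMeasure μ]
    (Xμ : Set M) (hXclosed : IsClosed Xμ) (hXfull : μ Xμ = 1)
    (hXmin : ∀ F : Set M, IsClosed F → μ F = 1 → Xμ ⊆ F)
    (hXcpt : IsCompact Xμ)
    (a b : ℝ) (ha : 0 < a) (hb : 0 < b)
    (hstd : ∀ x ∈ Xμ, ∀ r : ℝ, 0 < r →
      ENNReal.ofReal (min (a * r ^ b) 1) ≤ μ (ball x r))
    (n : ℕ) (ε : ℝ) (hε : 0 < ε) :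
    (Measure.pi fun _ : Fin n => μ)
        {ω : Fin n → M | 2 * ε < hausdorffDist Xμ (Set.range ω)}
      ≤ ENNReal.ofReal
          (min ((2 ^ b / (a * ε ^ b)) * Real.exp (-(n * a * ε ^ b))) 1) :=
  stmt_0_general μ Xμ hXclosed hXfull a b ha hb hstd n ε hε
end

section
/- Let (M,ρ) be a metric space and let μ be a Borel probability measure on M whose support X_μ is compact and which satisfies the (a,b)-standard assumption for some a>0, b>0. Let (X_i)_{i≥1} be an i.i.d. sequence with law μ and let X̂ₙ = {X₁,…,Xₙ}. Then there exists a constant C₁ > 0 depending only on a and b such that, almost surely, limsup_{n→∞} (n/log n)^{1/b} · d_H(X_μ, X̂ₙ) ≤ C₁. -/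
/-!
With `r n` chosen so that `a * r n ^ b = 3 log n / n`, every ball of radius `r n` centred in the
support has mass at least `3 log n / n`, so `n` independent samples all miss it with probability
at most `(1 - 3 log n / n) ^ n ≤ n⁻³`. A maximal `r n`-separated subset of the support is an
`r n`-net whose disjoint half-balls each carry mass `≳ 2⁻ᵇ log n / n`, so it has `O(n)` points.
Whenever every ball of the net contains a sample, the Hausdorff distance is at most `2 r n`, and
the probability that this fails is `O(n⁻²)`, which is summable: Borel–Cantelli gives the bound
eventually almost surely, and `(n / log n) ^ (1 / b) * 2 r n = 2 (3 / a) ^ (1 / b)`.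
-/

open MeasureTheory Metric Filter
open scoped ENNReal NNReal

section Packing

variable {M : Type*} [PseudoMetricSpace M] [MeasurableSpace M] [OpensMeasurableSpace M]
  {μ : Measure M} {K : Set M} {ε : ℝ≥0} {q : ℝ≥0∞}

lemma IsSeparated.card_mul_le_measure_univ {F : Finset M} (hF : IsSeparated ε (F : Set M))
    (hq : ∀ c ∈ F, q ≤ μ (ball c (ε / 2))) : F.card * q ≤ μ Set.univ := by
  have hdisj : (F : Set M).PairwiseDisjoint fun c => ball c (ε / 2) := by
    intro c hc c' hc' hne
    have hlt : (ε : ℝ≥0∞) < edist c c' := hF hc hc' hne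
    rw [edist_nndist, ENNReal.coe_lt_coe, ← NNReal.coe_lt_coe, coe_nndist] at hlt
    exact ball_disjoint_ball (by linarith)
  calc F.card * q = ∑ _c ∈ F, q := by simp
    _ ≤ ∑ c ∈ F, μ (ball c (ε / 2)) := Finset.sum_le_sum hq
    _ = μ (⋃ c ∈ F, ball c (ε / 2)) :=
      (measure_biUnion_finset hdisj fun _ _ => measurableSet_ball).symm
    _ ≤ μ Set.univ := measure_mono (Set.subset_univ _)

lemma packingNumber_ne_top_of_le_measure_ball [IsFiniteMeasure μ] (hq0 : q ≠ 0)
    (hq : ∀ x ∈ K, q ≤ μ (ball x (ε / 2))) : packingNumber ε K ≠ ⊤ := by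
  obtain ⟨N, hN⟩ := ENNReal.exists_nat_gt (ENNReal.div_lt_top (measure_ne_top μ Set.univ) hq0).ne
  refine ne_top_of_le_ne_top (ENat.natCast_ne_top N) (iSup₂_le fun C hCK => iSup_le fun hC => ?_)
  by_contra! hNC
  obtain ⟨D, hDC, hD⟩ := Set.exists_subset_encard_eq (Order.add_one_le_of_lt hNC)
  have hDfin : D.Finite := Set.finite_of_encard_eq_coe hD
  have hcard := IsSeparated.card_mul_le_measure_univ (μ := μ) (q := q)
    (hC.subset (hDfin.coe_toFinset.trans_subset hDC))
    fun c hc => hq c (hCK (hDC (hDfin.mem_toFinset.1 hc)))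
  rw [hDfin.encard_eq_coe_toFinset_card] at hD
  have hD' : hDfin.toFinset.card = N + 1 := by exact_mod_cast hD
  rw [hD', ← ENNReal.le_div_iff_mul_le (Or.inl hq0) (Or.inr (measure_ne_top μ _))] at hcard
  have hle : ((N + 1 : ℕ) : ℝ≥0∞) ≤ N := hcard.trans hN.le
  exact absurd (by exact_mod_cast hle : N + 1 ≤ N) (by omega)

lemma exists_finset_cover_card_mul_le_measure_univ [IsFiniteMeasure μ] (hq0 : q ≠ 0)
    (hq : ∀ x ∈ K, q ≤ μ (ball x (ε / 2))) :
    ∃ F : Finset M, ↑F ⊆ K ∧ (∀ x ∈ K, ∃ c ∈ F, dist x c ≤ ε) ∧ F.card * q ≤ μ Set.univ := by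
  have htop := packingNumber_ne_top_of_le_measure_ball hq0 hq
  have hfin : (maximalSeparatedSet ε K).Finite := by
    rw [← Set.encard_ne_top_iff, encard_maximalSeparatedSet htop]; exact htop
  refine ⟨hfin.toFinset, by simpa using maximalSeparatedSet_subset, fun x hx => ?_,
    IsSeparated.card_mul_le_measure_univ (by simpa using isSeparated_maximalSeparatedSet)
      fun c hc => hq c (maximalSeparatedSet_subset (hfin.mem_toFinset.1 hc))⟩
  obtain ⟨c, hc, hxc⟩ := isCover_maximalSeparatedSet htop hx
  exact ⟨c, hfin.mem_toFinset.2 hc, by simpa [← coe_nndist] using edist_le_coe.1 hxc⟩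

end Packing

section Sampling

variable {Ω M : Type*} [MeasurableSpace Ω] [MeasurableSpace M]
  {P : Measure Ω} {μ : Measure M} {X : ℕ → Ω → M}

lemma measure_iInter_range_preimage_eq_pow (hX : ∀ i, Measurable (X i))
    (hlaw : ∀ i, P.map (X i) = μ) (hind : ProbabilityTheory.iIndepFun X P) {s : Set M}
    (hs : MeasurableSet s) (n : ℕ) : P (⋂ i ∈ Finset.range n, X i ⁻¹' s) = μ s ^ n := by
  rw [hind.measure_inter_preimage_eq_mul (Finset.range n) (sets := fun _ => s) fun _ _ => hs]
  simp [← Measure.map_apply (hX _) hs, hlaw]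

lemma ae_forall_mem_of_measure_eq_one [IsProbabilityMeasure μ] (hX : ∀ i, Measurable (X i))
    (hlaw : ∀ i, P.map (X i) = μ) {s : Set M} (hs : MeasurableSet s) (hμs : μ s = 1) :
    ∀ᵐ ω ∂P, ∀ i, X i ω ∈ s :=
  ae_all_iff.2 fun i => ae_of_ae_map (hX i).aemeasurable <| by
    rwa [hlaw i, ae_iff, ← Set.compl_def, prob_compl_eq_zero_iff hs]

lemma measure_compl_le_ofReal_exp_neg [IsProbabilityMeasure μ] {s : Set M}
    (hs : MeasurableSet s) {t : ℝ} (ht0 : 0 ≤ t) (ht : ENNReal.ofReal t ≤ μ s) :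
    μ sᶜ ≤ ENNReal.ofReal (Real.exp (-t)) :=
  calc μ sᶜ = 1 - μ s := prob_compl_eq_one_sub hs
    _ ≤ 1 - ENNReal.ofReal t := tsub_le_tsub_left ht 1
    _ = ENNReal.ofReal (1 - t) := by rw [ENNReal.ofReal_sub _ ht0, ENNReal.ofReal_one]
    _ ≤ ENNReal.ofReal (Real.exp (-t)) := ENNReal.ofReal_le_ofReal (Real.one_sub_le_exp_neg t)

lemma measure_forall_lt_notMem_le [IsProbabilityMeasure μ] (hX : ∀ i, Measurable (X i))
    (hlaw : ∀ i, P.map (X i) = μ) (hind : ProbabilityTheory.iIndepFun X P) {s : Set M}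
    (hs : MeasurableSet s) {t : ℝ} (ht0 : 0 ≤ t) (ht : ENNReal.ofReal t ≤ μ s) (n : ℕ) :
    P {ω | ∀ i < n, X i ω ∉ s} ≤ ENNReal.ofReal (Real.exp (-(n * t))) := by
  have hset : {ω | ∀ i < n, X i ω ∉ s} = ⋂ i ∈ Finset.range n, X i ⁻¹' sᶜ := by
    ext; simp
  calc P {ω | ∀ i < n, X i ω ∉ s} = μ sᶜ ^ n := by
        rw [hset, measure_iInter_range_preimage_eq_pow hX hlaw hind hs.compl]
    _ ≤ ENNReal.ofReal (Real.exp (-t)) ^ n :=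
        pow_le_pow_left₀ zero_le (measure_compl_le_ofReal_exp_neg hs ht0 ht) n
    _ = ENNReal.ofReal (Real.exp (-(n * t))) := by
        rw [← ENNReal.ofReal_pow (Real.exp_pos _).le, ← Real.exp_nat_mul, mul_neg]

lemma measure_exists_forall_lt_notMem_ball_le [PseudoMetricSpace M] [OpensMeasurableSpace M]
    [IsProbabilityMeasure μ] (hX : ∀ i, Measurable (X i)) (hlaw : ∀ i, P.map (X i) = μ)
    (hind : ProbabilityTheory.iIndepFun X P) (F : Finset M) {r t : ℝ} (ht0 : 0 ≤ t)
    (ht : ∀ c ∈ F, ENNReal.ofReal t ≤ μ (ball c r)) (n : ℕ) :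
    P {ω | ∃ c ∈ F, ∀ i < n, X i ω ∉ ball c r} ≤
      F.card * ENNReal.ofReal (Real.exp (-(n * t))) := by
  have hset : {ω | ∃ c ∈ F, ∀ i < n, X i ω ∉ ball c r} =
      ⋃ c ∈ F, {ω | ∀ i < n, X i ω ∉ ball c r} := by
    ext; simp
  rw [hset, ← nsmul_eq_mul]
  refine (measure_biUnion_finset_le F _).trans (Finset.sum_le_card_nsmul _ _ _ fun c hc => ?_)
  exact measure_forall_lt_notMem_le hX hlaw hind measurableSet_ball ht0 (ht c hc) n

end Sampling

lemma hausdorffDist_le_two_mul_of_forall_dist_le {M : Type*} [PseudoMetricSpace M]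
    {K S F : Set M} {r : ℝ} (hr : 0 ≤ r) (hSK : S ⊆ K) (hF : ∀ x ∈ K, ∃ c ∈ F, dist x c ≤ r)
    (hS : ∀ c ∈ F, ∃ y ∈ S, dist y c ≤ r) : hausdorffDist K S ≤ 2 * r := by
  refine hausdorffDist_le_of_mem_dist (by positivity) (fun x hx => ?_)
    fun y hy => ⟨y, hSK hy, by simp [hr]⟩
  obtain ⟨c, hcF, hxc⟩ := hF x hx
  obtain ⟨y, hyS, hyc⟩ := hS c hcF
  exact ⟨y, hyS, (dist_triangle_right x y c).trans (by linarith)⟩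

lemma setOf_two_mul_lt_hausdorffDist_subset {Ω M : Type*} [PseudoMetricSpace M]
    {K : Set M} {F : Finset M} {r : ℝ} (hr : 0 ≤ r) (hF : ∀ x ∈ K, ∃ c ∈ F, dist x c ≤ r)
    (X : ℕ → Ω → M) (n : ℕ) :
    {ω | (∀ i, X i ω ∈ K) ∧ 2 * r < hausdorffDist K {y | ∃ i < n, y = X i ω}} ⊆
      {ω | ∃ c ∈ F, ∀ i < n, X i ω ∉ ball c r} := by
  rintro ω ⟨hK, hlt⟩
  simp only [Set.mem_ofPred]
  by_contra! hhit
  refine hlt.not_ge (hausdorffDist_le_two_mul_of_forall_dist_le hr ?_ hF fun c hc => ?_)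
  · rintro y ⟨i, -, rfl⟩
    exact hK i
  · obtain ⟨i, hi, hic⟩ := hhit c hc
    exact ⟨X i ω, ⟨i, hi, rfl⟩, (mem_ball.1 hic).le⟩

noncomputable def sampleRadius (a b : ℝ) (n : ℕ) : ℝ := (3 * Real.log n / n / a) ^ (1 / b)

section SampleRadius

variable {a b : ℝ} {n : ℕ}

lemma one_le_three_mul_log (hn : 2 ≤ n) : 1 ≤ 3 * Real.log n := by
  have h2 : Real.log 2 ≤ Real.log n := Real.log_le_log (by norm_num) (by exact_mod_cast hn)
  linarith [Real.log_two_gt_d9]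

lemma three_mul_log_le (hn : 36 ≤ n) : 3 * Real.log n ≤ n := by
  have hn' : (36 : ℝ) ≤ n := by exact_mod_cast hn
  have hlog := Real.log_le_rpow_div (x := n) (by positivity) (ε := 1 / 2) (by norm_num)
  have hsqrt : (6 : ℝ) ≤ (n : ℝ) ^ (1 / 2 : ℝ) := by
    rw [← Real.sqrt_eq_rpow, show (6 : ℝ) = √36 by rw [show (36 : ℝ) = 6 ^ 2 by norm_num,
      Real.sqrt_sq (by norm_num)]]
    exact Real.sqrt_le_sqrt hn'
  have hsq : (n : ℝ) ^ (1 / 2 : ℝ) * (n : ℝ) ^ (1 / 2 : ℝ) = n := by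
    rw [← Real.rpow_add (by positivity)]; norm_num
  rw [div_div_eq_mul_div, div_one] at hlog
  nlinarith

lemma sampleRadius_pos (ha : 0 < a) (hn : 2 ≤ n) : 0 < sampleRadius a b n := by
  have := one_le_three_mul_log hn
  have : (0 : ℝ) < n := by positivity
  unfold sampleRadius; positivity

lemma mul_sampleRadius_rpow (ha : 0 < a) (hb : b ≠ 0) (n : ℕ) :
    a * sampleRadius a b n ^ b = 3 * Real.log n / n := by
  have : 0 ≤ 3 * Real.log n / n / a := by have := Real.log_natCast_nonneg n; positivity
  rw [sampleRadius, ← Real.rpow_mul this, one_div_mul_cancel hb, Real.rpow_one,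
    mul_div_cancel₀ _ ha.ne']

lemma exp_neg_mul_three_mul_log_div (hn : (n : ℝ) ≠ 0) :
    Real.exp (-(n * (3 * Real.log n / n))) = 1 / (n : ℝ) ^ 3 := by
  rw [mul_div_cancel₀ _ hn, Real.exp_neg, show (3 : ℝ) = (3 : ℕ) by norm_num, Real.exp_nat_mul,
    Real.exp_log (by positivity), one_div]

lemma rpow_mul_two_mul_sampleRadius (ha : 0 < a) (hn : 2 ≤ n) :
    ((n : ℝ) / Real.log n) ^ (1 / b) * (2 * sampleRadius a b n) = 2 * (3 / a) ^ (1 / b) := by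
  have hlog : 0 < Real.log n := by linarith [one_le_three_mul_log hn]
  have hn0 : (0 : ℝ) < n := by positivity
  rw [sampleRadius, mul_left_comm, ← Real.mul_rpow (by positivity) (by positivity)]
  congr 2
  field_simp

end SampleRadius

def StandardAssumption {M : Type*} [PseudoMetricSpace M] [MeasurableSpace M] (μ : Measure M)
    (K : Set M) (a b : ℝ) : Prop :=
  ∀ x ∈ K, ∀ r : ℝ, 0 < r → ENNReal.ofReal (min (a * r ^ b) 1) ≤ μ (ball x r)

namespace StandardAssumption

variable {M : Type*} [PseudoMetricSpace M] [MeasurableSpace M] {μ : Measure M} {K : Set M}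
  {a b r : ℝ} {n : ℕ}

lemma ofReal_le_measure_ball (h : StandardAssumption μ K a b) {x : M} (hx : x ∈ K) (hr : 0 < r)
    (h1 : a * r ^ b ≤ 1) : ENNReal.ofReal (a * r ^ b) ≤ μ (ball x r) := by
  simpa [min_eq_left h1] using h x hx r hr

lemma exists_finset_cover_card_mul_le [OpensMeasurableSpace M] [IsProbabilityMeasure μ]
    (h : StandardAssumption μ K a b) (ha : 0 < a) (hb : 0 ≤ b) (hr : 0 < r)
    (h1 : a * r ^ b ≤ 1) :
    ∃ F : Finset M, ↑F ⊆ K ∧ (∀ x ∈ K, ∃ c ∈ F, dist x c ≤ r) ∧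
      (F.card : ℝ) * (a * r ^ b) ≤ 2 ^ b := by
  have h2b : (1 : ℝ) ≤ 2 ^ b := Real.one_le_rpow (by norm_num) hb
  have hhalf : a * (r / 2) ^ b = a * r ^ b / 2 ^ b := by
    rw [Real.div_rpow hr.le (by norm_num), mul_div_assoc]
  have hq0 : 0 < a * (r / 2) ^ b := by positivity
  have hq1 : a * (r / 2) ^ b ≤ 1 :=
    hhalf ▸ (div_le_self (by positivity) h2b).trans h1
  obtain ⟨F, hFK, hcover, hcard⟩ := exists_finset_cover_card_mul_le_measure_univ
    (ε := ⟨r, hr.le⟩) (ENNReal.ofReal_pos.2 hq0).ne'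
    fun x hx => h.ofReal_le_measure_ball hx (half_pos hr) hq1
  refine ⟨F, hFK, hcover, ?_⟩
  rw [measure_univ, ← ENNReal.ofReal_natCast, ← ENNReal.ofReal_mul (by positivity),
    ENNReal.ofReal_le_one, hhalf, mul_div_assoc', div_le_one (by positivity)] at hcard
  exact hcard

lemma measure_two_mul_sampleRadius_lt_hausdorffDist_le {Ω : Type*} [MeasurableSpace Ω]
    {P : Measure Ω} [OpensMeasurableSpace M] [IsProbabilityMeasure μ]
    (h : StandardAssumption μ K a b) (ha : 0 < a) (hb : 0 < b) {X : ℕ → Ω → M}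
    (hX : ∀ i, Measurable (X i)) (hlaw : ∀ i, P.map (X i) = μ)
    (hind : ProbabilityTheory.iIndepFun X P) (hn : 36 ≤ n) :
    P {ω | (∀ i, X i ω ∈ K) ∧
        2 * sampleRadius a b n < hausdorffDist K {y | ∃ i < n, y = X i ω}} ≤
      ENNReal.ofReal (2 ^ b / n ^ 2) := by
  set r := sampleRadius a b n
  set t := 3 * Real.log n / n
  have hr : 0 < r := sampleRadius_pos ha (by omega)
  have hrt : a * r ^ b = t := mul_sampleRadius_rpow ha hb.ne' n
  have hn0 : (0 : ℝ) < n := by positivity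
  have hlog := one_le_three_mul_log (n := n) (by omega)
  have ht0 : 0 < t := by positivity
  have ht1 : t ≤ 1 := div_le_one_of_le₀ (three_mul_log_le hn) hn0.le
  obtain ⟨F, hFK, hcover, hcard⟩ :=
    h.exists_finset_cover_card_mul_le ha hb.le hr (hrt ▸ ht1)
  have hball : ∀ c ∈ F, ENNReal.ofReal t ≤ μ (ball c r) := fun c hc =>
    hrt ▸ h.ofReal_le_measure_ball (hFK hc) hr (hrt ▸ ht1)
  have hcard' : (F.card : ℝ) ≤ 2 ^ b * n := by
    rw [hrt, ← le_div_iff₀ ht0] at hcard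
    refine hcard.trans ?_
    rw [div_le_iff₀ ht0, mul_assoc, mul_div_cancel₀ _ hn0.ne']
    exact le_mul_of_one_le_right (by positivity) hlog
  calc P {ω | (∀ i, X i ω ∈ K) ∧ 2 * r < hausdorffDist K {y | ∃ i < n, y = X i ω}}
      ≤ P {ω | ∃ c ∈ F, ∀ i < n, X i ω ∉ ball c r} :=
        measure_mono (setOf_two_mul_lt_hausdorffDist_subset hr.le hcover X n)
    _ ≤ F.card * ENNReal.ofReal (Real.exp (-(n * t))) :=
        measure_exists_forall_lt_notMem_ball_le hX hlaw hind F ht0.le hball n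
    _ ≤ ENNReal.ofReal (2 ^ b / n ^ 2) := by
        rw [← ENNReal.ofReal_natCast, ← ENNReal.ofReal_mul (by positivity),
          exp_neg_mul_three_mul_log_div hn0.ne']
        refine ENNReal.ofReal_le_ofReal ?_
        calc (F.card : ℝ) * (1 / (n : ℝ) ^ 3) ≤ 2 ^ b * n * (1 / (n : ℝ) ^ 3) := by gcongr
          _ = 2 ^ b / (n : ℝ) ^ 2 := by field_simp

end StandardAssumption

/-- There is a constant `C₁ > 0` depending only on `a` and `b` such that
for every metric space `M`, every Borel probability measure `μ` on `M` whose support `Xμ`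
(the smallest closed set of full measure) is compact and which satisfies the
`(a,b)`-standard assumption, and every i.i.d. sequence `(Xᵢ)` of law `μ`, almost surely
`limsup_{n→∞} (n / log n)^{1/b} · d_H(Xμ, {X₁,…,Xₙ}) ≤ C₁`. -/
theorem stmt_1 (a b : ℝ) (ha : 0 < a) (hb : 0 < b) :
    ∃ C₁ : ℝ, 0 < C₁ ∧
      ∀ (M : Type) [MetricSpace M] [MeasurableSpace M] [BorelSpace M]
        (μ : Measure M), IsProbabilityMeasure μ →
        ∀ Xμ : Set M, IsClosed Xμ → μ Xμ = 1 →
          (∀ F : Set M, IsClosed F → μ F = 1 → Xμ ⊆ F) → IsCompact Xμ →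
          (∀ x ∈ Xμ, ∀ r : ℝ, 0 < r →
            ENNReal.ofReal (min (a * r ^ b) 1) ≤ μ (ball x r)) →
        ∀ (Ω : Type) [MeasurableSpace Ω] (P : Measure Ω), IsProbabilityMeasure P →
        ∀ X : ℕ → Ω → M,
          (∀ i, Measurable (X i)) →
          (∀ i, Measure.map (X i) P = μ) →
          ProbabilityTheory.iIndepFun X P →
          ∀ᵐ ω ∂P,
            Filter.limsup
              (fun n : ℕ =>
                ((n : ℝ) / Real.log n) ^ ((1 : ℝ) / b) *
                  hausdorffDist Xμ {y : M | ∃ i < n, y = X i ω})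
              Filter.atTop ≤ C₁ := by
  refine ⟨2 * (3 / a) ^ ((1 : ℝ) / b), by positivity, ?_⟩
  intro M _ _ _ μ _ Xμ hXclosed hXfull _ _ hstd Ω _ P _ X hX hlaw hind
  have hsum : ∑' n, P {ω | (∀ i, X i ω ∈ Xμ) ∧ 2 * sampleRadius a b (n + 36) <
      hausdorffDist Xμ {y | ∃ i < n + 36, y = X i ω}} ≠ ∞ := by
    have hsummable : Summable fun n : ℕ => 2 ^ b / ((n + 36 : ℕ) : ℝ) ^ 2 :=
      (summable_nat_add_iff (f := fun n : ℕ => 2 ^ b / (n : ℝ) ^ 2) 36).2 <|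
        ((Real.summable_one_div_nat_pow.2 one_lt_two).mul_left (2 ^ b)).congr fun n => by ring
    refine ne_top_of_le_ne_top ?_ (ENNReal.tsum_le_tsum fun n =>
      StandardAssumption.measure_two_mul_sampleRadius_lt_hausdorffDist_le hstd ha hb hX hlaw hind
        (by omega))
    rw [← ENNReal.ofReal_tsum_of_nonneg (fun n => by positivity) hsummable]
    exact ENNReal.ofReal_ne_top
  filter_upwards [ae_eventually_notMem hsum,
    ae_forall_mem_of_measure_eq_one hX hlaw hXclosed.measurableSet hXfull] with ω hgood hmem
  have hrate_nonneg : ∀ n : ℕ, 0 ≤ ((n : ℝ) / Real.log n) ^ ((1 : ℝ) / b) := fun n =>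
    Real.rpow_nonneg (div_nonneg n.cast_nonneg (Real.log_natCast_nonneg n)) _
  refine limsup_le_of_le (isCoboundedUnder_le_of_le atTop fun n =>
    mul_nonneg (hrate_nonneg n) hausdorffDist_nonneg) ?_
  rw [← map_add_atTop_eq_nat 36, eventually_map]
  filter_upwards [hgood] with n hn
  have hd := not_lt.1 fun hlt => hn ⟨hmem, hlt⟩
  calc _ ≤ (((n + 36 : ℕ) : ℝ) / Real.log (n + 36 : ℕ)) ^ ((1 : ℝ) / b) *
        (2 * sampleRadius a b (n + 36)) := mul_le_mul_of_nonneg_left hd (hrate_nonneg _)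
    _ = 2 * (3 / a) ^ ((1 : ℝ) / b) := rpow_mul_two_mul_sampleRadius ha (by omega)
end

section
/- Let (M,ρ) be a metric space and let μ be a Borel probability measure on M whose support X_μ is compact and nonempty and which satisfies the (a,b)-standard assumption for some a>0, b>0. Let X₁,…,Xₙ (n ≥ 1) be i.i.d. with law μ and let X̂ₙ = {X₁,…,Xₙ}, regarded as a compact metric space with the metric induced by ρ. Then for every ε>0, ℙ( d_GH(X_μ, X̂ₙ) > 2ε ) ≤ min( (2^b/(a ε^b))·exp(−n a ε^b), 1 ), where d_GH denotes the Gromov–Hausdorff distance between the compact metric spaces (X_μ,ρ) and (X̂ₙ,ρ). -/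
/-!
Take a maximal `ε`-separated subset `Y` of the support `Xμ`; it is an `ε`-cover of `Xμ`, and
the balls `B(y, ε/2)`, `y ∈ Y`, are disjoint of mass at least `a (ε/2)ᵇ`, so
`|Y| ≤ 2ᵇ / (a εᵇ)`. Almost surely every sample lies in `Xμ`, and if moreover every ball
`B(y, ε)` contains a sample, then the Hausdorff (hence Gromov–Hausdorff) distance between `Xμ`
and the sample is at most `2ε`. A fixed ball `B(y, ε)` is missed by all `n` samples with
probability at most `(1 - a εᵇ)ⁿ ≤ exp(-n a εᵇ)`; a union bound over `Y` concludes.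
-/

open MeasureTheory Metric

noncomputable def ghDistSet {M : Type*} [MetricSpace M] (A B : Set M)
    (hA : IsCompact A) (hB : IsCompact B) (hA' : A.Nonempty) (hB' : B.Nonempty) : ℝ :=
  haveI : CompactSpace A := isCompact_iff_compactSpace.mp hA
  haveI : CompactSpace B := isCompact_iff_compactSpace.mp hB
  haveI : Nonempty A := hA'.to_subtype
  haveI : Nonempty B := hB'.to_subtype
  GromovHausdorff.ghDist A B

open scoped ENNReal NNReal

lemma ghDistSet_le_hausdorffDist {M : Type*} [MetricSpace M] (A B : Set M)
    (hA : IsCompact A) (hB : IsCompact B) (hA' : A.Nonempty) (hB' : B.Nonempty) :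
    ghDistSet A B hA hB hA' hB' ≤ hausdorffDist A B := by
  have : CompactSpace A := isCompact_iff_compactSpace.mp hA
  have : CompactSpace B := isCompact_iff_compactSpace.mp hB
  have : Nonempty A := hA'.to_subtype
  have : Nonempty B := hB'.to_subtype
  have h := GromovHausdorff.ghDist_le_hausdorffDist (isometry_subtype_coe (s := A))
    (isometry_subtype_coe (s := B))
  rwa [Subtype.range_coe, Subtype.range_coe] at h

lemma IsCompact.packingNumber_ne_top {X : Type*} [PseudoEMetricSpace X] {A : Set X}
    (hA : IsCompact A) {ε : ℝ≥0} (hε : ε ≠ 0) : packingNumber ε A ≠ ⊤ := by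
  obtain ⟨N, -, hN, hcover⟩ := exists_finite_isCover_of_isCompact (ε := ε / 2) (by simpa) hA
  refine ne_top_of_le_ne_top (Set.encard_ne_top_iff.mpr hN) ?_
  calc packingNumber ε A = packingNumber (2 * (ε / 2)) A := by rw [mul_div_cancel₀ _ two_ne_zero]
    _ ≤ externalCoveringNumber (ε / 2) A := packingNumber_two_mul_le_externalCoveringNumber _ _
    _ ≤ N.encard := hcover.externalCoveringNumber_le_encard

lemma IsCompact.exists_finset_isSeparated_isCover {X : Type*} [PseudoEMetricSpace X]
    {A : Set X} (hA : IsCompact A) {ε : ℝ≥0} (hε : ε ≠ 0) :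
    ∃ Y : Finset X, ↑Y ⊆ A ∧ IsSeparated ε (Y : Set X) ∧ IsCover ε A Y := by
  have hne := hA.packingNumber_ne_top hε
  have hfin : (maximalSeparatedSet ε A).Finite := by
    rw [← Set.encard_ne_top_iff, encard_maximalSeparatedSet hne]
    exact hne
  refine ⟨hfin.toFinset, ?_, ?_, ?_⟩ <;> rw [Set.Finite.coe_toFinset]
  exacts [maximalSeparatedSet_subset, isSeparated_maximalSeparatedSet,
    isCover_maximalSeparatedSet hne]

lemma Metric.IsSeparated.card_mul_le_measure_univ {M : Type*} [PseudoMetricSpace M]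
    [MeasurableSpace M] [OpensMeasurableSpace M] (μ : Measure M) {Y : Finset M} {ε : ℝ≥0}
    (hY : IsSeparated ε (Y : Set M)) {m : ℝ≥0∞} (hm : ∀ y ∈ Y, m ≤ μ (ball y (ε / 2))) :
    Y.card * m ≤ μ Set.univ := by
  have hdisj : (Y : Set M).PairwiseDisjoint fun y => ball y (ε / 2) := by
    intro y hy z hz hyz
    have hsep : (ε : ℝ) < dist y z := by
      have : (ε : ℝ≥0∞) < edist y z := hY hy hz hyz
      rw [edist_nndist, ENNReal.coe_lt_coe] at this
      exact_mod_cast this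
    exact ball_disjoint_ball (by linarith)
  calc Y.card * m = ∑ _y ∈ Y, m := by rw [Finset.sum_const, nsmul_eq_mul]
    _ ≤ ∑ y ∈ Y, μ (ball y (ε / 2)) := Finset.sum_le_sum hm
    _ = μ (⋃ y ∈ Y, ball y (ε / 2)) :=
      (measure_biUnion_finset hdisj fun _ _ => measurableSet_ball).symm
    _ ≤ μ Set.univ := measure_mono (Set.subset_univ _)

lemma hausdorffDist_le_of_isCover {M : Type*} [PseudoMetricSpace M] {X S N : Set M}
    {δ : ℝ≥0} {r : ℝ} (hr : 0 ≤ r) (hSX : S ⊆ X) (hN : IsCover δ X N)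
    (hNS : ∀ y ∈ N, ∃ z ∈ S, dist y z ≤ r) : hausdorffDist X S ≤ δ + r := by
  refine hausdorffDist_le_of_mem_dist (by positivity) (fun x hx => ?_) fun z hz =>
    ⟨z, hSX hz, by rw [dist_self]; positivity⟩
  obtain ⟨y, hyN, hxy⟩ := Set.mem_iUnion₂.mp (hN.subset_iUnion_closedBall hx)
  obtain ⟨z, hzS, hyz⟩ := hNS y hyN
  exact ⟨z, hzS, (dist_triangle x y z).trans (add_le_add (mem_closedBall.mp hxy) hyz)⟩

lemma measure_pi_forall_notMem {ι M : Type*} [Fintype ι] [MeasurableSpace M]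
    (μ : Measure M) [SigmaFinite μ] (s : Set M) :
    Measure.pi (fun _ : ι => μ) {ω | ∀ i, ω i ∉ s} = μ sᶜ ^ Fintype.card ι := by
  have : {ω : ι → M | ∀ i, ω i ∉ s} = Set.univ.pi fun _ => sᶜ := by ext; simp
  rw [this, Measure.pi_pi, Finset.prod_const, Finset.card_univ]

lemma prob_compl_le_ofReal_one_sub {M : Type*} [MeasurableSpace M] {μ : Measure M}
    [IsProbabilityMeasure μ] {s : Set M} (hs : MeasurableSet s) {p : ℝ} (hp₀ : 0 ≤ p)
    (hp : ENNReal.ofReal p ≤ μ s) : μ sᶜ ≤ ENNReal.ofReal (1 - p) := by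
  rw [prob_compl_eq_one_sub hs, ENNReal.ofReal_sub _ hp₀, ENNReal.ofReal_one]
  exact tsub_le_tsub_left hp 1

lemma ghDistSet_range_le_of_isCover {ι M : Type*} [MetricSpace M] {X N : Set M} {ω : ι → M}
    (hX : IsCompact X) (hω : IsCompact (Set.range ω)) (hX' : X.Nonempty)
    (hω' : (Set.range ω).Nonempty) {δ : ℝ≥0} (hωX : ∀ i, ω i ∈ X) (hN : IsCover δ X N)
    (hhit : ∀ y ∈ N, ∃ i, ω i ∈ ball y δ) :
    ghDistSet X (Set.range ω) hX hω hX' hω' ≤ 2 * δ := by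
  refine (ghDistSet_le_hausdorffDist _ _ hX hω hX' hω').trans ?_
  rw [two_mul]
  refine hausdorffDist_le_of_isCover δ.2 (Set.range_subset_iff.mpr hωX) hN fun y hy => ?_
  obtain ⟨i, hi⟩ := hhit y hy
  exact ⟨ω i, Set.mem_range_self i, (dist_comm y (ω i)).trans_le (mem_ball.mp hi).le⟩

lemma measure_pi_biUnion_forall_notMem_le {ι κ M : Type*} [Fintype ι] [MeasurableSpace M]
    (μ : Measure M) [IsProbabilityMeasure μ] (Y : Finset κ) {s : κ → Set M}
    (hs : ∀ y ∈ Y, MeasurableSet (s y)) {p : ℝ} (hp₀ : 0 ≤ p) (hp₁ : p ≤ 1)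
    (hp : ∀ y ∈ Y, ENNReal.ofReal p ≤ μ (s y)) :
    Measure.pi (fun _ : ι => μ) (⋃ y ∈ Y, {ω | ∀ i, ω i ∉ s y}) ≤
      ENNReal.ofReal (Y.card * (1 - p) ^ Fintype.card ι) := by
  calc Measure.pi (fun _ : ι => μ) (⋃ y ∈ Y, {ω | ∀ i, ω i ∉ s y})
      ≤ ∑ y ∈ Y, Measure.pi (fun _ : ι => μ) {ω | ∀ i, ω i ∉ s y} :=
        measure_biUnion_finset_le _ _
    _ ≤ ∑ _y ∈ Y, ENNReal.ofReal ((1 - p) ^ Fintype.card ι) := Finset.sum_le_sum fun y hy => by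
        rw [measure_pi_forall_notMem, ENNReal.ofReal_pow (sub_nonneg.mpr hp₁)]
        exact pow_le_pow_left' (prob_compl_le_ofReal_one_sub (hs y hy) hp₀ (hp y hy)) _
    _ = ENNReal.ofReal (Y.card * (1 - p) ^ Fintype.card ι) := by
      rw [Finset.sum_const, nsmul_eq_mul, ENNReal.ofReal_mul (Nat.cast_nonneg _),
        ENNReal.ofReal_natCast]

lemma natCast_mul_one_sub_min_pow_le {N n : ℕ} {s t : ℝ} (hn : n ≠ 0) (hs : 1 ≤ s)
    (ht : 0 < t) (hN : N * min (t / s) 1 ≤ 1) :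
    N * (1 - min t 1) ^ n ≤ s / t * Real.exp (-(n * t)) := by
  rcases le_or_gt 1 t with h1 | h1
  · rw [min_eq_right h1, sub_self, zero_pow hn, mul_zero]
    positivity
  have hts : t / s < 1 := (div_le_self ht.le hs).trans_lt h1
  rw [min_eq_left hts.le] at hN
  rw [min_eq_left h1.le]
  have hNle : (N : ℝ) ≤ s / t := by
    rw [le_div_iff₀ ht]
    rwa [← mul_div_assoc, div_le_one (by positivity)] at hN
  have hpow : (1 - t) ^ n ≤ Real.exp (-(n * t)) := by
    calc (1 - t) ^ n ≤ Real.exp (-t) ^ n :=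
          pow_le_pow_left₀ (by linarith) (by linarith [Real.add_one_le_exp (-t)]) n
      _ = Real.exp (-(n * t)) := by rw [← Real.exp_nat_mul]; ring_nf
  exact mul_le_mul hNle hpow (by positivity) (by positivity)

theorem stmt_3_general {M : Type*} [MetricSpace M] [MeasurableSpace M] [BorelSpace M]
    (μ : Measure M) [IsProbabilityMeasure μ]
    (Xμ : Set M) (hXclosed : IsClosed Xμ) (hXfull : μ Xμ = 1)
    (hXcpt : IsCompact Xμ) (hXne : Xμ.Nonempty)
    (a b : ℝ) (ha : 0 < a) (hb : 0 < b)
    (hstd : ∀ x ∈ Xμ, ∀ r : ℝ, 0 < r →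
      ENNReal.ofReal (min (a * r ^ b) 1) ≤ μ (ball x r))
    (n : ℕ) (hn : 0 < n) (ε : ℝ) (hε : 0 < ε) :
    (Measure.pi fun _ : Fin n => μ)
        {ω : Fin n → M |
          2 * ε < ghDistSet Xμ (Set.range ω) hXcpt
            (Set.finite_range ω).isCompact hXne ⟨ω ⟨0, hn⟩, Set.mem_range_self _⟩}
      ≤ ENNReal.ofReal
          (min ((2 ^ b / (a * ε ^ b)) * Real.exp (-(n * a * ε ^ b))) 1) := by
  set P := Measure.pi fun _ : Fin n => μ
  set E := {ω : Fin n → M | 2 * ε < ghDistSet Xμ (Set.range ω) hXcpt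
    (Set.finite_range ω).isCompact hXne ⟨ω ⟨0, hn⟩, Set.mem_range_self _⟩}
  obtain ⟨Y, hYX, hYsep, hYcover⟩ :=
    hXcpt.exists_finset_isSeparated_isCover (ε := ⟨ε, hε.le⟩) (NNReal.coe_ne_zero.mp hε.ne')
  have hcard : (Y.card : ℝ) * min (a * ε ^ b / 2 ^ b) 1 ≤ 1 := by
    have := hYsep.card_mul_le_measure_univ μ fun y hy => hstd y (hYX hy) (ε / 2) (by positivity)
    rw [measure_univ, ← ENNReal.ofReal_natCast, ← ENNReal.ofReal_mul (by positivity),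
      ENNReal.ofReal_le_one] at this
    rwa [Real.div_rpow hε.le zero_le_two, ← mul_div_assoc] at this
  have hsample : ∀ᵐ ω ∂P, ∀ i, ω i ∈ Xμ :=
    ae_all_iff.mpr fun i => (Measure.quasiMeasurePreserving_eval _ i).ae
      ((mem_ae_iff_prob_eq_one hXclosed.measurableSet).mpr hXfull)
  have hE : E ≤ᵐ[P] ⋃ y ∈ Y, {ω | ∀ i, ω i ∉ ball y ε} := by
    filter_upwards [hsample] with ω hω hgh
    by_contra hhit
    change ω ∉ ⋃ y ∈ Y, _ at hhit
    simp only [Set.mem_iUnion, Set.mem_ofPred_eq, not_exists, not_forall, not_not] at hhit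
    exact (ghDistSet_range_le_of_isCover _ _ _ _ hω hYcover hhit).not_gt hgh
  rw [ENNReal.ofReal_min, ENNReal.ofReal_one]
  refine le_min ?_ prob_le_one
  calc P E ≤ P (⋃ y ∈ Y, {ω | ∀ i, ω i ∉ ball y ε}) := measure_mono_ae hE
    _ ≤ ENNReal.ofReal (Y.card * (1 - min (a * ε ^ b) 1) ^ Fintype.card (Fin n)) :=
      measure_pi_biUnion_forall_notMem_le μ Y (fun _ _ => measurableSet_ball) (by positivity)
        (min_le_right _ 1) fun y hy => hstd y (hYX hy) ε hε
    _ ≤ _ := ENNReal.ofReal_le_ofReal <| by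
      simpa only [Fintype.card_fin, mul_assoc] using natCast_mul_one_sub_min_pow_le hn.ne'
        (Real.one_le_rpow one_le_two hb.le) (by positivity) hcard

/-- If `μ` is a Borel probability measure on a metric space `M` whose
support `Xμ` (the smallest closed set of full measure) is compact and nonempty and which
satisfies the `(a,b)`-standard assumption, and `X̂ₙ = {X₁,…,Xₙ}` (`n ≥ 1`) with
`X₁,…,Xₙ` i.i.d. of law `μ` (modelled by the product measure on `Fin n → M`), regarded
as a compact metric space with the induced metric, then for every `ε > 0`,
`ℙ(d_GH(Xμ, X̂ₙ) > 2ε) ≤ min((2^b/(a εᵇ)) exp(-n a εᵇ), 1)`. -/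
theorem stmt_3 {M : Type*} [MetricSpace M] [MeasurableSpace M] [BorelSpace M]
    (μ : Measure M) [IsProbabilityMeasure μ]
    (Xμ : Set M) (hXclosed : IsClosed Xμ) (hXfull : μ Xμ = 1)
    (hXmin : ∀ F : Set M, IsClosed F → μ F = 1 → Xμ ⊆ F)
    (hXcpt : IsCompact Xμ) (hXne : Xμ.Nonempty)
    (a b : ℝ) (ha : 0 < a) (hb : 0 < b)
    (hstd : ∀ x ∈ Xμ, ∀ r : ℝ, 0 < r →
      ENNReal.ofReal (min (a * r ^ b) 1) ≤ μ (ball x r))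
    (n : ℕ) (hn : 0 < n) (ε : ℝ) (hε : 0 < ε) :
    (Measure.pi fun _ : Fin n => μ)
        {ω : Fin n → M |
          2 * ε < ghDistSet Xμ (Set.range ω) hXcpt
            (Set.finite_range ω).isCompact hXne ⟨ω ⟨0, hn⟩, Set.mem_range_self _⟩}
      ≤ ENNReal.ofReal
          (min ((2 ^ b / (a * ε ^ b)) * Real.exp (-(n * a * ε ^ b))) 1) :=
  stmt_3_general μ Xμ hXclosed hXfull hXcpt hXne a b ha hb hstd n hn ε hε
end

section
/- Let (M,ρ) be a metric space, a>0, b>0, and suppose M has a non-isolated point x. Let (xₙ)_{n≥1} be any sequence in M ∖ {x} with ρ(x,xₙ) ≤ (a n)^{−1/b} for all n. Then there is an absolute constant C' > 0 such that for every sequence of estimators Ŝₙ (Borel-measurable maps from Mⁿ to the space of nonempty compact subsets of M endowed with the Hausdorff metric), liminf_{n→∞} ρ(x,xₙ)^{−1} · sup_{μ ∈ 𝒫(a,b,M)} 𝔼_{μ^{⊗n}}[ d_H( X_μ, Ŝₙ(X₁,…,Xₙ) ) ] ≥ C'. -/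
open MeasureTheory Metric Filter

/-- The support of a Borel measure on a metric space: the set of points all of whose
open balls have positive measure. For the measures considered below it is required to
have full measure, so that it is the smallest closed set of `μ`-measure one. -/
def msupp {M : Type*} [MetricSpace M] [MeasurableSpace M] (μ : Measure M) : Set M :=
  {x : M | ∀ r : ℝ, 0 < r → 0 < μ (ball x r)}

/-- `𝒫(a,b,M)`: the Borel probability measures on `M` whose support is compact, has full
measure (i.e. is the smallest closed set of measure one) and which satisfy the
`(a,b)`-standard assumption. -/
def stdClass (M : Type) [MetricSpace M] [MeasurableSpace M] (a b : ℝ) :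
    Set (Measure M) :=
  {μ : Measure M | IsProbabilityMeasure μ ∧ IsCompact (msupp μ) ∧ μ (msupp μ) = 1 ∧
    ∀ x ∈ msupp μ, ∀ r : ℝ, 0 < r →
      ENNReal.ofReal (min (a * r ^ b) 1) ≤ μ (ball x r)}

/-!
Le Cam's two-point method. Put `d = ρ(x, xₙ)` and `p = a d^b ≤ 1/n`. Both `δ_x` and
`(1 - p) δ_x + p δ_{xₙ}` satisfy the `(a,b)`-standard assumption, and their supports `{x}` and
`{x, xₙ}` are at Hausdorff distance at least `d`. Under either law all `n` samples equal `x` with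
probability at least `(1 - p)^n ≥ e⁻²`, and on that event the estimator returns one and the
same set `K`. Since `d ≤ d_H({x}, K) + d_H({x, xₙ}, K)`, one of the two risks is at least
`e⁻² d / 2`.
-/

open TopologicalSpace (NonemptyCompacts)

lemma exp_neg_two_le_one_sub_pow {p : ℝ} {n : ℕ} (hp0 : 0 ≤ p) (hp : p ≤ 1 / 2)
    (hnp : n * p ≤ 1) : Real.exp (-2) ≤ (1 - p) ^ n := by
  have hq : 0 < 1 - p := by linarith
  -- `log (1 - p) ≥ 1 - (1 - p)⁻¹ = -p / (1 - p) ≥ -2p`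
  have hlog : -2 * p ≤ Real.log (1 - p) := by
    refine le_trans ?_ (Real.one_sub_inv_le_log_of_pos hq)
    rw [le_sub_iff_add_le, ← le_sub_iff_add_le', inv_le_iff_one_le_mul₀ hq]
    nlinarith
  calc Real.exp (-2) ≤ Real.exp (n * (-2 * p)) := Real.exp_le_exp.mpr (by nlinarith)
    _ ≤ Real.exp (n * Real.log (1 - p)) := by gcongr
    _ = (1 - p) ^ n := by rw [Real.exp_nat_mul, Real.exp_log hq]

lemma mul_rpow_le_inv_of_le_rpow {a b d t : ℝ} (ha : 0 < a) (hb : 0 < b) (ht : 0 < t)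
    (hd0 : 0 ≤ d) (hd : d ≤ (a * t) ^ (-1 / b)) : a * d ^ b ≤ t⁻¹ := by
  have hat : 0 < a * t := mul_pos ha ht
  have hdb : d ^ b ≤ (a * t)⁻¹ := by
    calc d ^ b ≤ ((a * t) ^ (-1 / b)) ^ b := by gcongr
      _ = (a * t)⁻¹ := by
        rw [← Real.rpow_mul hat.le, div_mul_cancel₀ _ hb.ne', Real.rpow_neg_one]
  calc a * d ^ b ≤ a * (a * t)⁻¹ := by gcongr
    _ = t⁻¹ := by field_simp

section TwoPoint

variable {α : Type*} [MeasurableSpace α] {x y : α} {p : ℝ} {s : Set α}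

noncomputable def twoPoint (x y : α) (p : ℝ) : Measure α :=
  ENNReal.ofReal (1 - p) • Measure.dirac x + ENNReal.ofReal p • Measure.dirac y

lemma ofReal_one_sub_le_twoPoint (hx : x ∈ s) : ENNReal.ofReal (1 - p) ≤ twoPoint x y p s := by
  simp only [twoPoint, Measure.add_apply, Measure.smul_apply, Measure.dirac_apply_of_mem hx,
    smul_eq_mul, mul_one]
  exact le_self_add

lemma ofReal_le_twoPoint (hy : y ∈ s) : ENNReal.ofReal p ≤ twoPoint x y p s := by
  simp only [twoPoint, Measure.add_apply, Measure.smul_apply, Measure.dirac_apply_of_mem hy,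
    smul_eq_mul, mul_one]
  exact le_add_self

lemma twoPoint_apply_of_mem (hp0 : 0 ≤ p) (hp1 : p ≤ 1) (hx : x ∈ s) (hy : y ∈ s) :
    twoPoint x y p s = 1 := by
  simp only [twoPoint, Measure.add_apply, Measure.smul_apply, Measure.dirac_apply_of_mem hx,
    Measure.dirac_apply_of_mem hy, smul_eq_mul, mul_one]
  rw [← ENNReal.ofReal_add (by linarith) hp0, sub_add_cancel, ENNReal.ofReal_one]

lemma isProbabilityMeasure_twoPoint (hp0 : 0 ≤ p) (hp1 : p ≤ 1) :
    IsProbabilityMeasure (twoPoint x y p) :=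
  ⟨twoPoint_apply_of_mem hp0 hp1 (Set.mem_univ x) (Set.mem_univ y)⟩

lemma twoPoint_singleton_left [MeasurableSingletonClass α] (hxy : x ≠ y) :
    twoPoint x y p {x} = ENNReal.ofReal (1 - p) := by
  simp [twoPoint, hxy.symm]

end TwoPoint

section Support

variable {M : Type*} [MetricSpace M] [MeasurableSpace M]

lemma msupp_add (μ ν : Measure M) : msupp (μ + ν) = msupp μ ∪ msupp ν := by
  ext z
  simp only [msupp, Set.mem_ofPred_eq, Set.mem_union, Measure.add_apply, pos_iff_ne_zero,
    ne_eq, add_eq_zero, not_and_or]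
  refine ⟨fun h => ?_, ?_⟩
  · by_contra! hz
    obtain ⟨⟨r, hr, hμ⟩, ⟨s, hs, hν⟩⟩ := hz
    rcases h (min r s) (lt_min hr hs) with h | h
    · exact h (measure_mono_null (ball_subset_ball (min_le_left r s)) hμ)
    · exact h (measure_mono_null (ball_subset_ball (min_le_right r s)) hν)
  · rintro (h | h) r hr
    exacts [Or.inl (h r hr), Or.inr (h r hr)]

lemma msupp_smul {c : ENNReal} (hc : c ≠ 0) (μ : Measure M) : msupp (c • μ) = msupp μ := by
  ext z
  simp [msupp, pos_iff_ne_zero, hc]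

variable [OpensMeasurableSpace M]

lemma msupp_dirac (x : M) : msupp (Measure.dirac x) = {x} := by
  ext z
  simp only [msupp, Set.mem_ofPred_eq, Set.mem_singleton_iff,
    Measure.dirac_apply' _ measurableSet_ball]
  refine ⟨fun h => ?_, fun h r hr => by simp [h, hr]⟩
  by_contra hzx
  simpa using h (dist x z) (dist_pos.mpr (Ne.symm hzx))

lemma msupp_twoPoint {x y : M} {p : ℝ} (hp0 : 0 < p) (hp1 : p < 1) :
    msupp (twoPoint x y p) = {x, y} := by
  rw [twoPoint, msupp_add, msupp_smul (by simpa using hp1), msupp_smul (by simpa using hp0),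
    msupp_dirac, msupp_dirac, Set.singleton_union]

end Support

section StdClass

variable {M : Type} [MetricSpace M] [MeasurableSpace M] {a b : ℝ}

lemma nonempty_msupp_of_mem_stdClass {μ : Measure M} (hμ : μ ∈ stdClass M a b) :
    (msupp μ).Nonempty :=
  nonempty_of_measure_ne_zero (by rw [hμ.2.2.1]; exact one_ne_zero)

variable [OpensMeasurableSpace M]

lemma dirac_mem_stdClass (x : M) : Measure.dirac x ∈ stdClass M a b := by
  rw [stdClass, Set.mem_ofPred_eq, msupp_dirac]
  refine ⟨inferInstance, isCompact_singleton, Measure.dirac_apply_of_mem rfl, ?_⟩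
  rintro z rfl r hr
  rw [Measure.dirac_apply_of_mem (mem_ball_self hr)]
  exact ENNReal.ofReal_le_one.mpr (min_le_right _ _)

lemma twoPoint_mem_stdClass {x y : M} {p : ℝ} (ha : 0 ≤ a) (hb : 0 ≤ b)
    (hp : a * dist x y ^ b ≤ p) (hp0 : 0 < p) (hp2 : p ≤ 1 / 2) :
    twoPoint x y p ∈ stdClass M a b := by
  have hp1 : p < 1 := by linarith
  have := isProbabilityMeasure_twoPoint (x := x) (y := y) hp0.le hp1.le
  rw [stdClass, Set.mem_ofPred_eq, msupp_twoPoint hp0 hp1]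
  refine ⟨inferInstance, (Set.toFinite _).isCompact,
    twoPoint_apply_of_mem hp0.le hp1.le (by simp) (by simp), ?_⟩
  intro z hz r hr
  by_cases hrd : dist x y < r
  · have hball : x ∈ ball z r ∧ y ∈ ball z r := by
      rcases hz with rfl | rfl
      · exact ⟨mem_ball_self hr, by rwa [mem_ball, dist_comm]⟩
      · exact ⟨hrd, mem_ball_self hr⟩
    rw [twoPoint_apply_of_mem hp0.le hp1.le hball.1 hball.2]
    exact ENNReal.ofReal_le_one.mpr (min_le_right _ _)
  -- below the scale `dist x y` each atom alone carries the required mass `a r ^ b ≤ p`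
  have hmass : ENNReal.ofReal (min (a * r ^ b) 1) ≤ ENNReal.ofReal p := by
    gcongr
    calc min (a * r ^ b) 1 ≤ a * r ^ b := min_le_left _ _
      _ ≤ a * dist x y ^ b := by gcongr; exact not_lt.mp hrd
      _ ≤ p := hp
  refine hmass.trans ?_
  rcases hz with rfl | rfl
  · exact (ENNReal.ofReal_le_ofReal (by linarith)).trans
      (ofReal_one_sub_le_twoPoint (mem_ball_self hr))
  · exact ofReal_le_twoPoint (mem_ball_self hr)

end StdClass

lemma dist_le_hausdorffDist_singleton_pair {M : Type*} [MetricSpace M] (x y : M) :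
    dist x y ≤ hausdorffDist {x} {x, y} := by
  rw [hausdorffDist_comm, dist_comm, ← infDist_singleton]
  exact infDist_le_hausdorffDist_of_mem (by simp) <|
    hausdorffEDist_ne_top_of_nonempty_of_bounded (by simp) (by simp)
      (Set.toFinite _).isBounded (Set.toFinite _).isBounded

section Risk

variable {M : Type} [MetricSpace M] [MeasurableSpace M] {n : ℕ}

noncomputable def hausdorffRisk (μ : Measure M) (S : (Fin n → M) → NonemptyCompacts M) :
    ENNReal :=
  ∫⁻ ω, ENNReal.ofReal (hausdorffDist (msupp μ) (S ω : Set M))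
    ∂(Measure.pi fun _ : Fin n => μ)

lemma ofReal_hausdorffDist_mul_pow_le_hausdorffRisk [MeasurableSingletonClass M]
    (μ : Measure M) [SigmaFinite μ] (S : (Fin n → M) → NonemptyCompacts M) (x : M) :
    ENNReal.ofReal (hausdorffDist (msupp μ) (S fun _ => x : Set M)) * μ {x} ^ n ≤
      hausdorffRisk μ S := by
  calc _ = ∫⁻ ω in {fun _ => x}, ENNReal.ofReal (hausdorffDist (msupp μ) (S ω : Set M))
          ∂(Measure.pi fun _ : Fin n => μ) := by
        rw [lintegral_singleton, Measure.pi_singleton, Finset.prod_const, Finset.card_univ,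
          Fintype.card_fin]
    _ ≤ hausdorffRisk μ S := setLIntegral_le_lintegral _ _

lemma mul_hausdorffDist_le_two_mul_iSup_hausdorffRisk [MeasurableSingletonClass M] {a b : ℝ}
    {ν₀ ν₁ : Measure M} (h₀ : ν₀ ∈ stdClass M a b) (h₁ : ν₁ ∈ stdClass M a b)
    (S : (Fin n → M) → NonemptyCompacts M) (x : M) {c : ENNReal}
    (hc₀ : c ≤ ν₀ {x} ^ n) (hc₁ : c ≤ ν₁ {x} ^ n) :
    c * ENNReal.ofReal (hausdorffDist (msupp ν₀) (msupp ν₁)) ≤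
      2 * ⨆ μ ∈ stdClass M a b, hausdorffRisk μ S := by
  set K := S fun _ => x
  set T := ⨆ μ ∈ stdClass M a b, hausdorffRisk μ S
  have hfin : ∀ μ ∈ stdClass M a b, hausdorffEDist (msupp μ) (K : Set M) ≠ ⊤ :=
    fun μ hμ => hausdorffEDist_ne_top_of_nonempty_of_bounded
      (nonempty_msupp_of_mem_stdClass hμ) K.nonempty hμ.2.1.isBounded K.isCompact.isBounded
  have hrisk : ∀ μ ∈ stdClass M a b, c ≤ μ {x} ^ n →
      c * ENNReal.ofReal (hausdorffDist (msupp μ) K) ≤ T := fun μ hμ hc => by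
    have : IsProbabilityMeasure μ := hμ.1
    calc c * ENNReal.ofReal (hausdorffDist (msupp μ) K)
        ≤ ENNReal.ofReal (hausdorffDist (msupp μ) K) * μ {x} ^ n := by
          rw [mul_comm]; gcongr
      _ ≤ hausdorffRisk μ S := ofReal_hausdorffDist_mul_pow_le_hausdorffRisk μ S x
      _ ≤ T := le_biSup (fun μ => hausdorffRisk μ S) hμ
  have htri : hausdorffDist (msupp ν₀) (msupp ν₁) ≤
      hausdorffDist (msupp ν₀) K + hausdorffDist (msupp ν₁) K := by
    rw [hausdorffDist_comm (s := msupp ν₁)]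
    exact hausdorffDist_triangle (hfin ν₀ h₀)
  calc c * ENNReal.ofReal (hausdorffDist (msupp ν₀) (msupp ν₁))
      ≤ c * ENNReal.ofReal (hausdorffDist (msupp ν₀) K) +
          c * ENNReal.ofReal (hausdorffDist (msupp ν₁) K) := by
        rw [← mul_add, ← ENNReal.ofReal_add hausdorffDist_nonneg hausdorffDist_nonneg]
        gcongr
    _ ≤ T + T := add_le_add (hrisk ν₀ h₀ hc₀) (hrisk ν₁ h₁ hc₁)
    _ = 2 * T := (two_mul T).symm

end Risk

lemma ofReal_mul_dist_le_iSup_hausdorffRisk {M : Type} [MetricSpace M] [MeasurableSpace M]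
    [BorelSpace M] {a b : ℝ} (ha : 0 < a) (hb : 0 < b) {n : ℕ} (hn : 2 ≤ n) {x y : M}
    (hxy : x ≠ y) (hd : a * dist x y ^ b ≤ (n : ℝ)⁻¹)
    (S : (Fin n → M) → NonemptyCompacts M) :
    ENNReal.ofReal (Real.exp (-2) / 2 * dist x y) ≤
      ⨆ μ ∈ stdClass M a b, hausdorffRisk μ S := by
  set p := a * dist x y ^ b
  have hp0 : 0 < p := by have := dist_pos.mpr hxy; positivity
  have hn0 : (0 : ℝ) < n := by positivity
  have hnp : n * p ≤ 1 := by rwa [← le_div_iff₀' hn0, one_div]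
  have hp2 : p ≤ 1 / 2 := by
    have : (2 : ℝ) ≤ n := by exact_mod_cast hn
    nlinarith
  have hc₁ : ENNReal.ofReal (Real.exp (-2)) ≤ twoPoint x y p {x} ^ n := by
    rw [twoPoint_singleton_left hxy, ← ENNReal.ofReal_pow (by linarith)]
    exact ENNReal.ofReal_le_ofReal (exp_neg_two_le_one_sub_pow hp0.le hp2 hnp)
  have hc₀ : ENNReal.ofReal (Real.exp (-2)) ≤ Measure.dirac x {x} ^ n := by
    rw [Measure.dirac_apply_of_mem (Set.mem_singleton x), one_pow, ENNReal.ofReal_le_one]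
    exact Real.exp_le_one_iff.mpr (by norm_num)
  have key := mul_hausdorffDist_le_two_mul_iSup_hausdorffRisk (dirac_mem_stdClass x)
    (twoPoint_mem_stdClass ha.le hb.le le_rfl hp0 hp2) S x hc₀ hc₁
  rw [msupp_dirac, msupp_twoPoint hp0 (by linarith)] at key
  have hdist := dist_le_hausdorffDist_singleton_pair x y
  rw [← ENNReal.mul_le_mul_iff_right two_ne_zero ENNReal.ofNat_ne_top]
  calc 2 * ENNReal.ofReal (Real.exp (-2) / 2 * dist x y)
      = ENNReal.ofReal (Real.exp (-2)) * ENNReal.ofReal (dist x y) := by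
        rw [← ENNReal.ofReal_mul (Real.exp_pos _).le, ← ENNReal.ofReal_ofNat 2,
          ← ENNReal.ofReal_mul zero_le_two]
        ring_nf
    _ ≤ _ := le_trans (by gcongr) key

/-- There is an absolute constant `C' > 0` such that for every metric
space `M`, all `a, b > 0`, every non-isolated point `x ∈ M`, every sequence `(xₙ)` of
points distinct from `x` with `ρ(x,xₙ) ≤ (a n)^{-1/b}`, and every sequence of
Borel-measurable estimators `Sₙ : Mⁿ → {nonempty compact subsets of M}` (with the
Hausdorff metric on the codomain),
`liminf_n ρ(x,xₙ)⁻¹ · sup_{μ ∈ 𝒫(a,b,M)} 𝔼_{μ^⊗n}[d_H(Xμ, Sₙ(X₁,…,Xₙ))] ≥ C'`. -/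
theorem stmt_5 :
    ∃ C' : ℝ, 0 < C' ∧
      ∀ (M : Type) [MetricSpace M] [MeasurableSpace M] [BorelSpace M]
        (a b : ℝ), 0 < a → 0 < b →
        ∀ x : M, (∀ ε : ℝ, 0 < ε → ∃ y : M, y ≠ x ∧ dist y x < ε) →
        ∀ xs : ℕ → M,
          (∀ n : ℕ, 1 ≤ n → xs n ≠ x ∧ dist x (xs n) ≤ (a * n) ^ (-(1 : ℝ) / b)) →
        ∀ S : (n : ℕ) → (Fin n → M) → TopologicalSpace.NonemptyCompacts M,
          (∀ n : ℕ,
            @Measurable _ _ inferInstance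
              (borel (TopologicalSpace.NonemptyCompacts M)) (S n)) →
          ENNReal.ofReal C' ≤
            Filter.liminf
              (fun n : ℕ =>
                (ENNReal.ofReal (dist x (xs n)))⁻¹ *
                  ⨆ μ ∈ stdClass M a b,
                    ∫⁻ ω, ENNReal.ofReal
                        (hausdorffDist (msupp μ) ((S n ω : Set M)))
                      ∂(Measure.pi fun _ : Fin n => μ))
              Filter.atTop := by
  refine ⟨Real.exp (-2) / 2, by positivity, ?_⟩
  intro M _ _ _ a b ha hb x _ xs hxs S _
  refine le_liminf_of_le (by isBoundedDefault) ?_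
  filter_upwards [eventually_ge_atTop 2] with n hn
  obtain ⟨hne, hd⟩ := hxs n (by omega)
  have hpos : 0 < dist x (xs n) := dist_pos.mpr hne.symm
  have hrate := mul_rpow_le_inv_of_le_rpow ha hb (by positivity) hpos.le hd
  have hbound := ofReal_mul_dist_le_iSup_hausdorffRisk ha hb hn hne.symm hrate (S n)
  rw [mul_comm, ← div_eq_mul_inv, ENNReal.le_div_iff_mul_le (Or.inl (by simpa using hpos))
    (Or.inl ENNReal.ofReal_ne_top), ← ENNReal.ofReal_mul (by positivity)]
  exact hbound
end

section
/- Let f : ℝ^d → [0,∞) be a Lebesgue-measurable probability density with support X_f contained in a compact set χ ⊂ ℝ^d, and let G₀ = { x : f(x) > 0 }. Assume assumption [B]: there exist constants ε₀ > 0 and C_b > 0 such that for all ε ∈ (0, ε₀], the ε-inner set I_ε(G₀) is nonempty and d(x, I_ε(G₀)) ≤ C_b ε for all x ∈ ∂G₀. Then d_H(G₀, X_f) = 0; equivalently, X_f = closure(G₀). -/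
/-!
The density vanishes off `G₀ = {f > 0}`, so the closed set `closure G₀` has full mass and the support
lies inside it. Conversely, the ε-inner sets are open subsets of `G₀`, so assumption [B] puts
every boundary point of `G₀` within `C_b ε` of `interior G₀` for all small `ε`; hence
`closure G₀ = closure (interior G₀)`. A nonempty open subset of `G₀` has positive mass, so
`interior G₀`, and therefore its closure, lies in the support.
-/

open MeasureTheory Metric

/-- The `ε`-inner set of a set `G`: the union of all open balls of radius `ε` entirely
contained in `G`. -/
def innerSet {E : Type*} [MetricSpace E] (ε : ℝ) (G : Set E) : Set E :=
  ⋃ x ∈ {x : E | ball x ε ⊆ G}, ball x ε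

open Set Filter Topology

section InnerSet

variable {E : Type*} [MetricSpace E]

theorem innerSet_subset_interior (ε : ℝ) (G : Set E) : innerSet ε G ⊆ interior G :=
  interior_maximal (iUnion₂_subset fun _ hx => hx) (isOpen_biUnion fun _ _ => isOpen_ball)

theorem closure_interior_eq_closure_of_innerSet {G : Set E} {ε₀ C : ℝ} (hε₀ : 0 < ε₀)
    (hB : ∀ ε : ℝ, 0 < ε → ε ≤ ε₀ →
      (innerSet ε G).Nonempty ∧ ∀ x ∈ frontier G, infDist x (innerSet ε G) ≤ C * ε) :
    closure (interior G) = closure G := by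
  refine (closure_mono interior_subset).antisymm fun y hy => ?_
  rw [closure_eq_interior_union_frontier] at hy
  rcases hy with hy | hy
  · exact subset_closure hy
  have hne : (interior G).Nonempty :=
    (hB ε₀ hε₀ le_rfl).1.mono (innerSet_subset_interior ε₀ G)
  have hle : ∀ᶠ ε in 𝓝[>] 0, infDist y (interior G) ≤ C * ε := by
    filter_upwards [Ioc_mem_nhdsGT hε₀] with ε ⟨hε, hεε₀⟩
    obtain ⟨hI, hfr⟩ := hB ε hε hεε₀
    exact (infDist_le_infDist_of_subset (innerSet_subset_interior ε G) hI).trans (hfr y hy)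
  have hlim : Tendsto (fun ε : ℝ => C * ε) (𝓝[>] 0) (𝓝 0) := by
    simpa using ((continuous_const_mul C).tendsto 0).mono_left nhdsWithin_le_nhds
  rw [mem_closure_iff_infDist_zero hne]
  exact le_antisymm (ge_of_tendsto hlim hle) infDist_nonneg

end InnerSet

section WithDensity

variable {α : Type*} [MeasurableSpace α] {ν : Measure α} {f : α → ℝ}

theorem withDensity_ofReal_univ (hfi : Integrable f ν) (hf : 0 ≤ᵐ[ν] f) :
    ν.withDensity (fun x => ENNReal.ofReal (f x)) univ = ENNReal.ofReal (∫ x, f x ∂ν) := by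
  rw [withDensity_apply _ MeasurableSet.univ, Measure.restrict_univ,
    ofReal_integral_eq_lintegral_ofReal hfi hf]

theorem withDensity_ofReal_compl_setOf_pos (hf : AEMeasurable f ν) :
    ν.withDensity (fun x => ENNReal.ofReal (f x)) {x | 0 < f x}ᶜ = 0 := by
  rw [withDensity_apply_eq_zero' hf.ennreal_ofReal]
  convert measure_empty (μ := ν)
  ext x
  simp

theorem interior_setOf_pos_subset_of_withDensity_compl_eq_zero [TopologicalSpace α]
    [ν.IsOpenPosMeasure] (hf : AEMeasurable f ν) {F : Set α} (hF : IsClosed F)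
    (hFc : ν.withDensity (fun x => ENNReal.ofReal (f x)) Fᶜ = 0) :
    interior {x | 0 < f x} ⊆ F := by
  intro x hx
  by_contra hxF
  rw [withDensity_apply_eq_zero' hf.ennreal_ofReal] at hFc
  have hU : interior {x | 0 < f x} ∩ Fᶜ ⊆ {y | ENNReal.ofReal (f y) ≠ 0} ∩ Fᶜ :=
    fun y hy => ⟨by simpa using interior_subset hy.1, hy.2⟩
  exact ((isOpen_interior.inter hF.isOpen_compl).measure_pos ν ⟨x, hx, hxF⟩).ne'
    (measure_mono_null hU hFc)

end WithDensity

theorem stmt_10_general {d : ℕ} (f : EuclideanSpace ℝ (Fin d) → ℝ)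
    (hf_meas : Measurable f) (hf_nonneg : ∀ x, 0 ≤ f x)
    (hf_int : ∫ x, f x = 1)
    (Xf : Set (EuclideanSpace ℝ (Fin d)))
    (hclosed : IsClosed Xf)
    (hfull : volume.withDensity (fun x => ENNReal.ofReal (f x)) Xf = 1)
    (hmin : ∀ F : Set (EuclideanSpace ℝ (Fin d)), IsClosed F →
      volume.withDensity (fun x => ENNReal.ofReal (f x)) F = 1 → Xf ⊆ F)
    (ε₀ Cb : ℝ) (hε₀ : 0 < ε₀)
    (hB : ∀ ε : ℝ, 0 < ε → ε ≤ ε₀ →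
      (innerSet ε {x | 0 < f x}).Nonempty ∧
      ∀ x ∈ frontier {x | 0 < f x},
        infDist x (innerSet ε {x | 0 < f x}) ≤ Cb * ε) :
    hausdorffDist {x | 0 < f x} Xf = 0 ∧ Xf = closure {x | 0 < f x} := by
  set G := {x | 0 < f x}
  set μ := volume.withDensity (fun x => ENNReal.ofReal (f x))
  have hμ : μ univ = 1 := by
    rw [withDensity_ofReal_univ (integrable_of_integral_eq_one hf_int)
      (ae_of_all _ hf_nonneg), hf_int, ENNReal.ofReal_one]
  have hXf_sub : Xf ⊆ closure G := hmin _ isClosed_closure <| by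
    rw [measure_of_measure_compl_eq_zero (measure_mono_null
      (compl_subset_compl.2 subset_closure)
      (withDensity_ofReal_compl_setOf_pos hf_meas.aemeasurable)), hμ]
  have hXfc : μ Xfᶜ = 0 := by
    rw [measure_compl hclosed.measurableSet (hfull ▸ ENNReal.one_ne_top), hμ, hfull, tsub_self]
  have hX : Xf = closure G := by
    refine hXf_sub.antisymm ?_
    rw [← closure_interior_eq_closure_of_innerSet hε₀ hB]
    exact closure_minimal (interior_setOf_pos_subset_of_withDensity_compl_eq_zero
      hf_meas.aemeasurable hclosed hXfc) hclosed
  exact ⟨by rw [hX, hausdorffDist_self_closure], hX⟩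

/-- Let `f : ℝ^d → [0,∞)` be a measurable probability density with
support `X_f` (smallest closed set of full `f·λ`-measure) contained in a compact set
`χ`, and `G₀ = {x | f x > 0}`. Under assumption `[B]` (for all `ε ∈ (0, ε₀]` the
`ε`-inner set of `G₀` is nonempty and every boundary point of `G₀` is within `C_b ε` of
it), one has `d_H(G₀, X_f) = 0`, equivalently `X_f = closure G₀`. -/
theorem stmt_10 {d : ℕ} (f : EuclideanSpace ℝ (Fin d) → ℝ)
    (hf_meas : Measurable f) (hf_nonneg : ∀ x, 0 ≤ f x)
    (hf_int : ∫ x, f x = 1)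
    (Xf : Set (EuclideanSpace ℝ (Fin d)))
    (hclosed : IsClosed Xf)
    (hfull : volume.withDensity (fun x => ENNReal.ofReal (f x)) Xf = 1)
    (hmin : ∀ F : Set (EuclideanSpace ℝ (Fin d)), IsClosed F →
      volume.withDensity (fun x => ENNReal.ofReal (f x)) F = 1 → Xf ⊆ F)
    (χ : Set (EuclideanSpace ℝ (Fin d))) (hχ : IsCompact χ) (hXχ : Xf ⊆ χ)
    (ε₀ Cb : ℝ) (hε₀ : 0 < ε₀) (hCb : 0 < Cb)
    (hB : ∀ ε : ℝ, 0 < ε → ε ≤ ε₀ →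
      (innerSet ε {x | 0 < f x}).Nonempty ∧
      ∀ x ∈ frontier {x | 0 < f x},
        infDist x (innerSet ε {x | 0 < f x}) ≤ Cb * ε) :
    hausdorffDist {x | 0 < f x} Xf = 0 ∧ Xf = closure {x | 0 < f x} :=
  stmt_10_general f hf_meas hf_nonneg hf_int Xf hclosed hfull hmin ε₀ Cb hε₀ hB
end

section
/- Let f : ℝ^d → [0,∞) be a Lebesgue-measurable probability density supported in a compact set χ ⊂ ℝ^d, let μ = f·λ, and let G₀ = { x : f(x) > 0 }. Assume assumption [A]: f is bounded above by f_max > 0 and there exist constants α, C_a, δ_a > 0 such that every x ∈ G₀ with f(x) ≤ δ_a satisfies f(x) ≥ C_a · d(x, ∂G₀)^α; and assumption [B]: there exist ε₀ > 0 and C_b > 0 such that for all ε ∈ (0, ε₀], I_ε(G₀) ≠ ∅ and d(x, I_ε(G₀)) ≤ C_b ε for all x ∈ ∂G₀. Then μ satisfies a standard assumption with exponent b = α + d: there exist a > 0 and r₀ > 0, depending only on d, α, C_a, C_b, δ_a and ε₀, such that μ(B(x,r)) ≥ a r^{α+d} for every x ∈ closure(G₀) and every r ∈ (0, r₀). -/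
/-!
Near a point `x` of `closure G₀`, either `x` is deep inside `G₀`, or there is a boundary point
`p` close to `x`; by [B] `p` is within `C_b ε` of a ball of radius `ε` inside `G₀`. With
`ε ≍ r` this gives a ball `B(w, ε) ⊆ G₀ ∩ B(x, r)`. On `B(w, ε/2)` the distance to `∂G₀` is at
least `ε/2`, so by [A] `f ≳ ε^α` there, and `μ(B(x, r)) ≥ μ(B(w, ε/2)) ≳ ε^α ε^d ≍ r^(α+d)`.
In positive dimension the nonempty set `G₀ ⊆ χ` has a boundary point because `χ` is compact;
in dimension zero the ball is the whole space and `μ(B(x, r)) = 1`.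
-/

open MeasureTheory Metric

open Set Module

def SatisfiesStandardAssumption {X : Type*} [PseudoMetricSpace X] [MeasurableSpace X]
    (μ : Measure X) (S : Set X) (b : ℝ) : Prop :=
  ∃ a r₀ : ℝ, 0 < a ∧ 0 < r₀ ∧
    ∀ x ∈ S, ∀ r : ℝ, 0 < r → r < r₀ → ENNReal.ofReal (a * r ^ b) ≤ μ (ball x r)

theorem IsPreconnected.subset_of_disjoint_frontier {X : Type*} [TopologicalSpace X]
    {s G : Set X} (hs : IsPreconnected s) (hsG : (s ∩ G).Nonempty)
    (hd : Disjoint s (frontier G)) : s ⊆ G := by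
  have hint : ∀ y ∈ s, y ∈ closure G → y ∈ interior G := fun y hys hyG =>
    by_contra fun hyi => hd.ne_of_mem hys ⟨hyG, hyi⟩ rfl
  obtain ⟨y, hys, hyG⟩ := hsG
  refine (hs.subset_of_closure_inter_subset isOpen_interior
    ⟨y, hys, hint y hys (subset_closure hyG)⟩ ?_).trans interior_subset
  rintro z ⟨hz, hzs⟩
  exact hint z hzs (closure_mono interior_subset hz)

theorem Set.Nonempty.frontier_nonempty_of_subset_isCompact {E : Type*} [NormedAddCommGroup E]
    [NormedSpace ℝ E] [Nontrivial E] {G χ : Set E} (hG : G.Nonempty) (hχ : IsCompact χ)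
    (hGχ : G ⊆ χ) : (frontier G).Nonempty :=
  nonempty_frontier_iff.2
    ⟨hG, fun h => noncompact_univ E (hχ.of_isClosed_subset isClosed_univ (h ▸ hGχ))⟩

theorem sub_dist_le_infDist_frontier {X : Type*} [PseudoMetricSpace X] {G : Set X}
    {w y : X} {ε : ℝ} (hF : (frontier G).Nonempty) (hw : ball w ε ⊆ G) :
    ε - dist y w ≤ infDist y (frontier G) := by
  refine (le_infDist hF).2 fun p hp => ?_
  have hpw : ε ≤ dist p w :=
    not_lt.1 fun h => hp.2 (interior_maximal hw isOpen_ball (mem_ball.2 h))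
  linarith [dist_triangle p y w, dist_comm y p]

theorem min_le_of_le_infDist_frontier {X : Type*} [PseudoMetricSpace X] {f : X → ℝ}
    {G : Set X} {α Ca δa ρ : ℝ} (hα : 0 ≤ α) (hCa : 0 ≤ Ca) (hρ : 0 ≤ ρ)
    (hA : ∀ x ∈ G, f x ≤ δa → Ca * infDist x (frontier G) ^ α ≤ f x)
    {y : X} (hy : y ∈ G) (hρy : ρ ≤ infDist y (frontier G)) : min δa (Ca * ρ ^ α) ≤ f y := by
  rcases le_or_gt (f y) δa with h | h
  · exact (min_le_right _ _).trans
      ((mul_le_mul_of_nonneg_left (Real.rpow_le_rpow hρ hρy hα) hCa).trans (hA y hy h))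
  · exact (min_le_left _ _).trans h.le

theorem min_mul_rpow_le_min_mul_rpow {δ C c r α : ℝ} (hδ : 0 ≤ δ) (hc : 0 ≤ c) (hr₀ : 0 ≤ r)
    (hr₁ : r ≤ 1) (hα : 0 ≤ α) :
    min δ (C * c ^ α) * r ^ α ≤ min δ (C * (c * r) ^ α) := by
  rw [min_mul_of_nonneg _ _ (Real.rpow_nonneg hr₀ α), Real.mul_rpow hc hr₀, ← mul_assoc]
  exact min_le_min_right _ (mul_le_of_le_one_right hδ (Real.rpow_le_one hr₀ hr₁ hα))

theorem ofReal_mul_le_withDensity {X : Type*} [MeasurableSpace X] (μ : Measure X)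
    {f : X → ℝ} {s t : Set X} {m : ℝ} (hs : MeasurableSet s) (hst : s ⊆ t)
    (hm : ∀ y ∈ s, m ≤ f y) :
    ENNReal.ofReal m * μ s ≤ μ.withDensity (fun y => ENNReal.ofReal (f y)) t :=
  calc ENNReal.ofReal m * μ s = ∫⁻ _ in s, ENNReal.ofReal m ∂μ := (setLIntegral_const s _).symm
    _ ≤ ∫⁻ y in s, ENNReal.ofReal (f y) ∂μ :=
      setLIntegral_mono' hs fun y hy => ENNReal.ofReal_le_ofReal (hm y hy)
    _ = μ.withDensity (fun y => ENNReal.ofReal (f y)) s := (withDensity_apply _ hs).symm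
    _ ≤ _ := measure_mono hst

theorem withDensity_ball_eq_ofReal_integral {X : Type*} [PseudoMetricSpace X] [Subsingleton X]
    [MeasurableSpace X] (μ : Measure X) {f : X → ℝ} (hf : Integrable f μ) (hf₀ : 0 ≤ᵐ[μ] f)
    {x : X} {r : ℝ} (hr : 0 < r) :
    μ.withDensity (fun y => ENNReal.ofReal (f y)) (ball x r) = ENNReal.ofReal (∫ y, f y ∂μ) := by
  rw [show ball x r = univ from eq_univ_of_forall fun y => Subsingleton.elim x y ▸ mem_ball_self hr,
    withDensity_apply _ MeasurableSet.univ, Measure.restrict_univ,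
    ofReal_integral_eq_lintegral_ofReal hf hf₀]

section NormedSpace

variable {E : Type*} [NormedAddCommGroup E] [NormedSpace ℝ E] {G : Set E}

theorem ball_subset_of_mem_closure_of_disjoint_frontier {x : E} {ρ : ℝ} (hx : x ∈ closure G)
    (hρ : 0 < ρ) (hd : Disjoint (ball x ρ) (frontier G)) : ball x ρ ⊆ G :=
  (convex_ball x ρ).isPreconnected.subset_of_disjoint_frontier
    (mem_closure_iff.1 hx _ isOpen_ball (mem_ball_self hρ)) hd

theorem exists_ball_subset_inter_ball {x : E} {ε r Cb : ℝ} (hx : x ∈ closure G) (hCb : 0 ≤ Cb)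
    (hε : 0 < ε) (hr : 2 * (Cb + 3) * ε ≤ r) (hI : (innerSet ε G).Nonempty)
    (hIdist : ∀ p ∈ frontier G, infDist p (innerSet ε G) ≤ Cb * ε) :
    ∃ w, ball w ε ⊆ G ∧ ball w ε ⊆ ball x r := by
  by_cases hd : Disjoint (ball x (r / 2)) (frontier G)
  · exact ⟨x, (ball_subset_ball (by nlinarith)).trans
      (ball_subset_of_mem_closure_of_disjoint_frontier hx (by nlinarith) hd),
      ball_subset_ball (by nlinarith)⟩
  obtain ⟨p, hpx, hpF⟩ := not_disjoint_iff.1 hd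
  obtain ⟨z, hzI, hpz⟩ :=
    (infDist_lt_iff hI).1 ((hIdist p hpF).trans_lt (lt_add_of_pos_right _ hε))
  obtain ⟨w, hwG, hzw⟩ : ∃ w, ball w ε ⊆ G ∧ z ∈ ball w ε := by
    simpa only [innerSet, mem_iUnion, exists_prop, mem_ofPred_eq] using hzI
  refine ⟨w, hwG, fun y hy => ?_⟩
  rw [mem_ball] at hy hzw hpx ⊢
  linarith [dist_triangle4 y w z p, dist_triangle y p x, dist_comm w z, dist_comm p z]

variable [MeasurableSpace E] [BorelSpace E] (μ : Measure E) [μ.IsAddHaarMeasure]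

theorem ofReal_mul_measure_ball_le_withDensity_ball {f : E → ℝ} {α Ca δa Cb ε r : ℝ}
    (hα : 0 ≤ α) (hCa : 0 ≤ Ca) (hCb : 0 ≤ Cb)
    (hA : ∀ x ∈ G, f x ≤ δa → Ca * infDist x (frontier G) ^ α ≤ f x)
    (hF : (frontier G).Nonempty) (hε : 0 < ε) (hr : 2 * (Cb + 3) * ε ≤ r)
    (hI : (innerSet ε G).Nonempty)
    (hIdist : ∀ p ∈ frontier G, infDist p (innerSet ε G) ≤ Cb * ε)
    {x : E} (hx : x ∈ closure G) :
    ENNReal.ofReal (min δa (Ca * (ε / 2) ^ α)) * μ (ball 0 (ε / 2)) ≤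
      μ.withDensity (fun y => ENNReal.ofReal (f y)) (ball x r) := by
  obtain ⟨w, hwG, hwx⟩ := exists_ball_subset_inter_ball hx hCb hε hr hI hIdist
  rw [← Measure.addHaar_ball_center μ w]
  refine ofReal_mul_le_withDensity μ measurableSet_ball
    ((ball_subset_ball (by linarith)).trans hwx) fun y hy => ?_
  refine min_le_of_le_infDist_frontier hα hCa (by positivity) hA
    (hwG (ball_subset_ball (by linarith) hy)) ?_
  linarith [sub_dist_le_infDist_frontier (y := y) hF hwG, mem_ball.1 hy]

theorem satisfiesStandardAssumption_withDensity [FiniteDimensional ℝ E] {f : E → ℝ}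
    {α Ca δa ε₀ Cb : ℝ} (hα : 0 ≤ α) (hCa : 0 < Ca) (hδa : 0 < δa) (hε₀ : 0 < ε₀)
    (hCb : 0 ≤ Cb) (hA : ∀ x ∈ G, f x ≤ δa → Ca * infDist x (frontier G) ^ α ≤ f x)
    (hB : ∀ ε : ℝ, 0 < ε → ε ≤ ε₀ →
      (innerSet ε G).Nonempty ∧ ∀ x ∈ frontier G, infDist x (innerSet ε G) ≤ Cb * ε)
    (hF : (frontier G).Nonempty) :
    SatisfiesStandardAssumption (μ.withDensity fun y => ENNReal.ofReal (f y)) (closure G)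
      (α + finrank ℝ E) := by
  set K := 2 * (Cb + 3)
  have hK : 0 < K := by positivity
  set c := 1 / (2 * K) with hc
  set v := (μ (ball 0 1)).toReal
  have hv : 0 < v := ENNReal.toReal_pos (measure_ball_pos μ 0 one_pos).ne' measure_ball_lt_top.ne
  refine ⟨min δa (Ca * c ^ α) * (c ^ finrank ℝ E * v), min 1 (K * ε₀), by positivity,
    by positivity, fun x hx r hr hr₀ => ?_⟩
  have hr₁ : r ≤ 1 := (hr₀.trans_le (min_le_left _ _)).le
  have hε : r / K ≤ ε₀ := (div_le_iff₀' hK).2 (hr₀.trans_le (min_le_right _ _)).le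
  obtain ⟨hI, hIdist⟩ := hB (r / K) (by positivity) hε
  refine le_trans ?_ (ofReal_mul_measure_ball_le_withDensity_ball μ hα hCa.le hCb hA hF
    (by positivity) (mul_div_cancel₀ r hK.ne').le hI hIdist hx)
  have hεc : r / K / 2 = c * r := by rw [hc]; field_simp
  rw [hεc, Measure.addHaar_ball_of_pos μ 0 (by positivity),
    ← ENNReal.ofReal_toReal (measure_ball_lt_top (μ := μ) (x := 0) (r := 1)).ne,
    ← ENNReal.ofReal_mul (by positivity), ← ENNReal.ofReal_mul (by positivity)]
  refine ENNReal.ofReal_le_ofReal ?_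
  calc min δa (Ca * c ^ α) * (c ^ finrank ℝ E * v) * r ^ (α + finrank ℝ E)
      = min δa (Ca * c ^ α) * r ^ α * ((c * r) ^ finrank ℝ E * v) := by
        rw [Real.rpow_add hr, Real.rpow_natCast, mul_pow]; ring
    _ ≤ min δa (Ca * (c * r) ^ α) * ((c * r) ^ finrank ℝ E * v) := by
        gcongr
        exact min_mul_rpow_le_min_mul_rpow hδa.le (by positivity) hr.le hr₁ hα

end NormedSpace

theorem stmt_11_general {d : ℕ} (f : EuclideanSpace ℝ (Fin d) → ℝ)
    (hf_nonneg : ∀ x, 0 ≤ f x)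
    (hf_int : ∫ x, f x = 1)
    (χ : Set (EuclideanSpace ℝ (Fin d))) (hχ : IsCompact χ)
    (hsupp : ∀ x, x ∉ χ → f x = 0)
    (α Ca δa : ℝ) (hα : 0 < α) (hCa : 0 < Ca) (hδa : 0 < δa)
    (hA : ∀ x ∈ {y | 0 < f y}, f x ≤ δa →
      Ca * infDist x (frontier {y | 0 < f y}) ^ α ≤ f x)
    (ε₀ Cb : ℝ) (hε₀ : 0 < ε₀) (hCb : 0 < Cb)
    (hB : ∀ ε : ℝ, 0 < ε → ε ≤ ε₀ →
      (innerSet ε {y | 0 < f y}).Nonempty ∧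
      ∀ x ∈ frontier {y | 0 < f y},
        infDist x (innerSet ε {y | 0 < f y}) ≤ Cb * ε) :
    ∃ a r₀ : ℝ, 0 < a ∧ 0 < r₀ ∧
      ∀ x ∈ closure {y | 0 < f y}, ∀ r : ℝ, 0 < r → r < r₀ →
        ENNReal.ofReal (a * r ^ (α + d)) ≤
          volume.withDensity (fun x => ENNReal.ofReal (f x)) (ball x r) := by
  rcases (frontier {y | 0 < f y}).eq_empty_or_nonempty with hF | hF
  · refine ⟨1, 1, one_pos, one_pos, fun x hx r hr hr₁ => ?_⟩
    have : Subsingleton (EuclideanSpace ℝ (Fin d)) := not_nontrivial_iff_subsingleton.1 fun _ =>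
      ((closure_nonempty_iff.1 ⟨x, hx⟩).frontier_nonempty_of_subset_isCompact hχ
        fun y hy => by_contra fun hyχ => hy.ne' (hsupp y hyχ)).ne_empty hF
    rw [withDensity_ball_eq_ofReal_integral volume
      (Integrable.of_integral_ne_zero (by simp [hf_int])) (ae_of_all _ hf_nonneg) hr, hf_int,
      one_mul]
    exact ENNReal.ofReal_le_ofReal (Real.rpow_le_one hr.le hr₁.le (add_nonneg hα.le d.cast_nonneg))
  · have h := satisfiesStandardAssumption_withDensity volume hα.le hCa hδa hε₀ hCb.le hA hB hF
    rwa [finrank_euclideanSpace_fin] at h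

/-- Let `f : ℝ^d → [0,∞)` be a measurable probability density with
support in a compact set `χ`, `μ = f·λ` and `G₀ = {x | f x > 0}`. Under assumption `[A]`
(`f ≤ f_max` and `f(x) ≥ C_a d(x, ∂G₀)^α` whenever `x ∈ G₀` and `f(x) ≤ δ_a`) and
assumption `[B]` (for all `ε ∈ (0, ε₀]` the `ε`-inner set of `G₀` is nonempty and each
boundary point of `G₀` is within `C_b ε` of it), `μ` satisfies a standard assumption
with exponent `b = α + d`: there are `a > 0` and `r₀ > 0` with
`μ(B(x,r)) ≥ a r^{α+d}` for all `x ∈ closure G₀` and `r ∈ (0, r₀)`. -/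
theorem stmt_11 {d : ℕ} (f : EuclideanSpace ℝ (Fin d) → ℝ)
    (hf_meas : Measurable f) (hf_nonneg : ∀ x, 0 ≤ f x)
    (hf_int : ∫ x, f x = 1)
    (χ : Set (EuclideanSpace ℝ (Fin d))) (hχ : IsCompact χ)
    (hsupp : ∀ x, x ∉ χ → f x = 0)
    (fmax : ℝ) (hfmax : 0 < fmax) (hbd : ∀ x, f x ≤ fmax)
    (α Ca δa : ℝ) (hα : 0 < α) (hCa : 0 < Ca) (hδa : 0 < δa)
    (hA : ∀ x ∈ {y | 0 < f y}, f x ≤ δa →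
      Ca * infDist x (frontier {y | 0 < f y}) ^ α ≤ f x)
    (ε₀ Cb : ℝ) (hε₀ : 0 < ε₀) (hCb : 0 < Cb)
    (hB : ∀ ε : ℝ, 0 < ε → ε ≤ ε₀ →
      (innerSet ε {y | 0 < f y}).Nonempty ∧
      ∀ x ∈ frontier {y | 0 < f y},
        infDist x (innerSet ε {y | 0 < f y}) ≤ Cb * ε) :
    ∃ a r₀ : ℝ, 0 < a ∧ 0 < r₀ ∧
      ∀ x ∈ closure {y | 0 < f y}, ∀ r : ℝ, 0 < r → r < r₀ →
        ENNReal.ofReal (a * r ^ (α + d)) ≤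
          volume.withDensity (fun x => ENNReal.ofReal (f x)) (ball x r) :=
  stmt_11_general f hf_nonneg hf_int χ hχ hsupp α Ca δa hα hCa hδa hA ε₀ Cb hε₀ hCb hB
end
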